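/- arXiv:0809.0369 — 8 statements merged into one kernel-verified Lean document; each statement's English description precedes it below -/
import Mathlib

section
/- Let q > 3 be a prime power and let G = SL(2, F_q). Then there exist elements x, y, u ∈ G with u ≠ 1 such that [x u x⁻¹, y u y⁻¹] = u. (Equivalently, the verbal dynamical system D₁ given by the self-map (x,y,u) ↦ (x, y, [x u x⁻¹, y u y⁻¹]) of G³ has a fixed point outside the forbidden set G × G × {1}.) -/
/-!
If `a`, `b` and `u = ⁅a, b⁆` are all conjugate to `u`, say `a = x u x⁻¹` and `b = y u y⁻¹`, then
`(x, y, u)` is a fixed point. In `SL(2, F_q)` elements with the same trace `s`, `s ^ 2 ≠ 4`, are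
conjugate, and `tr ⁅a, b⁆ = tr a ^ 2 + tr b ^ 2 + tr (a b) ^ 2 - tr a * tr b * tr (a b) - 2`
(Fricke), so it suffices to find `s ^ 2 ≠ 4` and `γ` on the curve
`γ ^ 2 - s ^ 2 * γ + 2 * s ^ 2 - s - 2 = 0`: a pair `a`, `b` of trace `s` with `tr (a b) = γ`
always exists, because nondegenerate binary quadratic forms over a finite field are universal.

In odd characteristic a point over `s` exists iff the discriminant `s⁴ - 8 s² + 4 s + 8` is a
square. At `s = 0, -3, -2/3` it equals `8`, `5` and `40 * (2/9) ^ 2`, and `8 * 5 = 40`, so one of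
them is a square unless the characteristic is `3`. There `s ↦ -1 - 1/s` multiplies the
discriminant by `-(1 + s)` up to squares, a non-square when `-1` is not a square and `1 + s` is.
In characteristic `2` the curve is parametrised by a cube root.
-/

open scoped MatrixGroups commutatorElement

namespace FiniteField

variable {F : Type*} [Field F] [Fintype F]

theorem isSquare_mul_of_not_isSquare {a b : F} (ha : ¬IsSquare a) (hb : ¬IsSquare b) :
    IsSquare (a * b) := by
  classical
  have ha0 : a ≠ 0 := by rintro rfl; exact ha ⟨0, by simp⟩
  have hb0 : b ≠ 0 := by rintro rfl; exact hb ⟨0, by simp⟩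
  rw [← quadraticChar_one_iff_isSquare (mul_ne_zero ha0 hb0), map_mul,
    quadraticChar_neg_one_iff_not_isSquare.mpr ha, quadraticChar_neg_one_iff_not_isSquare.mpr hb]
  norm_num

open Polynomial in
theorem exists_eq_of_discrim_ne_zero {a b c : F} (h : discrim a b c ≠ 0) (d : F) :
    ∃ x y : F, a * x ^ 2 + b * x * y + c * y ^ 2 = d := by
  by_cases ha : a = 0
  · have hb : b ≠ 0 := by rintro rfl; simp [discrim, ha] at h
    exact ⟨(d - c) / b, 1, by subst ha; field_simp; ring⟩
  by_cases h2 : (2 : F) = 0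
  · have : CharP F 2 := CharTwo.of_one_ne_zero_of_two_eq_zero one_ne_zero h2
    obtain ⟨r, hr⟩ := isSquare_of_char_two (ringChar.eq F 2) (d / a)
    exact ⟨r, 0, by rw [← sq, div_eq_iff ha] at hr; linear_combination -hr⟩
  · have hodd : Fintype.card F % 2 = 1 :=
      odd_card_of_char_ne_two fun hF => h2 (by simpa [hF] using ringChar.Nat.cast_ringChar (R := F))
    -- `4 a (a x² + b x y + c y²) = (2 a x + b y)² - (discrim a b c) y²`
    obtain ⟨z, y, hzy⟩ := exists_root_sum_quadratic (f := X ^ 2)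
      (g := C (-discrim a b c) * X ^ 2 + C 0 * X + C (-(4 * a * d))) (degree_X_pow 2)
      (degree_quadratic (neg_ne_zero.mpr h)) hodd
    refine ⟨(z - b * y) / (2 * a), y, ?_⟩
    simp only [eval_add, eval_mul, eval_pow, eval_C, eval_X, discrim] at hzy
    field_simp
    linear_combination hzy

end FiniteField

namespace Matrix.SpecialLinearGroup

section CommRing

variable {R : Type*} [CommRing R]

theorem trace_commutator (A B : SL(2, R)) :
    ((⁅A, B⁆ : SL(2, R)) : Matrix (Fin 2) (Fin 2) R).trace =
      (A : Matrix (Fin 2) (Fin 2) R).trace ^ 2 + (B : Matrix (Fin 2) (Fin 2) R).trace ^ 2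
        + ((A * B : SL(2, R)) : Matrix (Fin 2) (Fin 2) R).trace ^ 2
        - (A : Matrix (Fin 2) (Fin 2) R).trace * (B : Matrix (Fin 2) (Fin 2) R).trace
          * ((A * B : SL(2, R)) : Matrix (Fin 2) (Fin 2) R).trace - 2 := by
  have hA := A.2
  have hB := B.2
  rw [det_fin_two] at hA hB
  simp only [commutatorElement_def, coe_mul, coe_inv, adjugate_fin_two, trace_fin_two, mul_apply,
    Fin.sum_univ_two, of_apply, cons_val', cons_val_zero, cons_val_one, empty_val',
    cons_val_fin_one]
  linear_combination (A 0 0 + A 1 1) ^ 2 * hB + (B 0 0 + B 1 1) ^ 2 * hA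
    - 2 * (A 0 0 * A 1 1 - A 0 1 * A 1 0) * hB - 2 * hA

def companion (s : R) : SL(2, R) :=
  ⟨!![0, -1; 1, s], by simp [det_fin_two_of]⟩

@[simp]
theorem coe_companion (s : R) : (companion s : Matrix (Fin 2) (Fin 2) R) = !![0, -1; 1, s] :=
  rfl

theorem trace_companion (s : R) : (companion s : Matrix (Fin 2) (Fin 2) R).trace = s := by
  simp [trace_fin_two_of]

end CommRing

variable {F : Type*} [Field F] [Fintype F]

theorem isConj_companion_of_trace_eq {M : SL(2, F)} {s : F}
    (hM : (M : Matrix (Fin 2) (Fin 2) F).trace = s) (hs : s ^ 2 ≠ 4) :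
    IsConj (companion s) M := by
  have hdet := M.2
  rw [det_fin_two] at hdet
  rw [trace_fin_two] at hM
  -- `P` has columns `v` and `M v`, so `det P` is a binary form in `v` of discriminant `s ^ 2 - 4`.
  obtain ⟨x, y, hxy⟩ := FiniteField.exists_eq_of_discrim_ne_zero
    (a := M 1 0) (b := M 1 1 - M 0 0) (c := -M 0 1)
    (fun h => hs (by rw [discrim] at h; linear_combination h + 4 * hdet - (M 0 0 + M 1 1 + s) * hM))
    1
  let P : SL(2, F) := ⟨!![x, M 0 0 * x + M 0 1 * y; y, M 1 0 * x + M 1 1 * y],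
    by rw [det_fin_two_of]; linear_combination hxy⟩
  refine isConj_iff.mpr ⟨P, mul_inv_eq_iff_eq_mul.mpr ?_⟩
  ext i j
  rw [coe_mul, coe_mul]
  fin_cases i <;> fin_cases j <;>
    simp only [P, coe_companion, mul_apply, Fin.sum_univ_two, of_apply, cons_val', cons_val_fin_one,
      cons_val_zero, cons_val_one, Fin.isValue, Fin.zero_eta, Fin.mk_one, mul_zero, mul_neg, mul_one,
      zero_add]
  · linear_combination x * hdet - (M 0 0 * x + M 0 1 * y) * hM
  · linear_combination y * hdet - (M 1 0 * x + M 1 1 * y) * hM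

theorem isConj_of_trace_eq {M N : SL(2, F)}
    (h : (M : Matrix (Fin 2) (Fin 2) F).trace = (N : Matrix (Fin 2) (Fin 2) F).trace)
    (hs : (M : Matrix (Fin 2) (Fin 2) F).trace ^ 2 ≠ 4) : IsConj M N :=
  (isConj_companion_of_trace_eq rfl hs).symm.trans (isConj_companion_of_trace_eq h.symm hs)

theorem exists_trace_eq_and_trace_companion_mul_eq {s : F} (hs : s ^ 2 ≠ 4) (γ : F) :
    ∃ B : SL(2, F), (B : Matrix (Fin 2) (Fin 2) F).trace = s ∧
      ((companion s * B : SL(2, F)) : Matrix (Fin 2) (Fin 2) F).trace = γ := by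
  have hs4 : s ^ 2 - 4 ≠ 0 := sub_ne_zero.mpr hs
  obtain ⟨p, q, hpq⟩ := FiniteField.exists_eq_of_discrim_ne_zero (a := -1) (b := s) (c := -1)
    (by rw [discrim]; convert hs4 using 1; ring) ((γ ^ 2 - s ^ 2 * γ + 2 * s ^ 2 - 4) / (s ^ 2 - 4))
  -- translate `(p, q)` by the centre of the conic `det B = 1`
  obtain ⟨x, y, hxy⟩ : ∃ x y : F, x * (s - x) - y * (y + s ^ 2 - s * x - γ) = 1 := by
    refine ⟨(s ^ 3 - 2 * s - s * γ) / (s ^ 2 - 4) + p, (s ^ 2 - 2 * γ) / (s ^ 2 - 4) + q, ?_⟩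
    field_simp at hpq ⊢
    linear_combination (s ^ 2 - 4) * hpq
  let B : SL(2, F) := ⟨!![x, y; y + s ^ 2 - s * x - γ, s - x], by rw [det_fin_two_of]; exact hxy⟩
  refine ⟨B, by simp [B, trace_fin_two_of], ?_⟩
  rw [coe_mul, coe_companion, trace_fin_two]
  simp only [B, mul_apply, Fin.sum_univ_two, of_apply, cons_val', cons_val_fin_one, cons_val_zero,
    cons_val_one, Fin.isValue, zero_mul, neg_mul, one_mul, neg_sub, zero_add]
  ring

end Matrix.SpecialLinearGroup

theorem exists_conj_commutator_eq_of_isConj {G : Type*} [Group G] {a b u : G} (hu : ⁅a, b⁆ = u)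
    (ha : IsConj u a) (hb : IsConj u b) : ∃ x y : G, ⁅x * u * x⁻¹, y * u * y⁻¹⁆ = u := by
  obtain ⟨x, rfl⟩ := isConj_iff.mp ha
  obtain ⟨y, rfl⟩ := isConj_iff.mp hb
  exact ⟨x, y, hu⟩

theorem pow_three_injective {F : Type*} [Field F] (h : ∀ ω : F, ω ^ 2 + ω + 1 ≠ 0) :
    Function.Injective (fun x : F => x ^ 3) := by
  intro x y hxy
  by_contra hne
  have hxy' : x ^ 2 + x * y + y ^ 2 = 0 :=
    (mul_eq_zero.mp (by linear_combination hxy : (x - y) * (x ^ 2 + x * y + y ^ 2) = 0)).resolve_left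
      (sub_ne_zero.mpr hne)
  by_cases hy : y = 0
  · subst hy
    exact hne (pow_eq_zero_iff two_ne_zero |>.mp (by linear_combination hxy'))
  · exact h (x / y) (by field_simp; linear_combination hxy')

section TraceCurve

variable {F : Type*} [Field F]

/-- The discriminant of `γ ^ 2 - s ^ 2 * γ + 2 * s ^ 2 - s - 2` as a polynomial in `γ`. -/
def traceDisc (s : F) : F :=
  s ^ 4 - 8 * s ^ 2 + 4 * s + 8

theorem exists_trace_curve_of_isSquare_traceDisc (h2 : (2 : F) ≠ 0) {s : F}
    (hs : IsSquare (traceDisc s)) : ∃ γ : F, γ ^ 2 - s ^ 2 * γ + 2 * s ^ 2 - s - 2 = 0 := by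
  obtain ⟨r, hr⟩ := hs
  rw [traceDisc] at hr
  refine ⟨(s ^ 2 + r) / 2, ?_⟩
  field_simp
  linear_combination -hr

theorem traceDisc_neg_one_sub_inv (h3 : (3 : F) = 0) {r : F} (hr : r ≠ 0) :
    traceDisc (-1 - r⁻¹) * (r ^ 2) ^ 2 * (1 + r) = -traceDisc r := by
  unfold traceDisc
  field_simp
  linear_combination (-r ^ 5 - 6 * r ^ 4 - 6 * r ^ 3 - 2 * r ^ 2 + 3 * r + 3) * h3

variable [Fintype F]

theorem exists_trace_curve_of_two_eq_zero (h2 : (2 : F) = 0) (hq : 2 < Fintype.card F) :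
    ∃ s γ : F, γ ^ 2 - s ^ 2 * γ + 2 * s ^ 2 - s - 2 = 0 ∧ s ^ 2 ≠ 4 := by
  classical
  obtain ⟨ξ, t, ht, hξt⟩ : ∃ ξ t : F, t ≠ 0 ∧ t ^ 3 = ξ ^ 2 + ξ := by
    by_cases hω : ∃ ω : F, ω ^ 2 + ω + 1 = 0
    · obtain ⟨ω, hω⟩ := hω
      exact ⟨ω, 1, one_ne_zero, by linear_combination h2 - hω⟩
    · simp only [not_exists] at hω
      obtain ⟨ξ, -, hξ⟩ := Finset.exists_mem_notMem_of_card_lt_card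
        (s := ({0, 1} : Finset F)) (t := Finset.univ)
        (by rw [Finset.card_univ]; exact Finset.card_le_two.trans_lt hq)
      simp only [Finset.mem_insert, Finset.mem_singleton, not_or] at hξ
      obtain ⟨t, ht⟩ := Finite.injective_iff_surjective.mp (pow_three_injective hω) (ξ ^ 2 + ξ)
      refine ⟨ξ, t, ?_, ht⟩
      rintro rfl
      rcases mul_eq_zero.mp (by linear_combination -ht : ξ * (ξ + 1) = 0) with h | h
      · exact hξ.1 h
      · exact hξ.2 (by linear_combination h - h2)
  refine ⟨t⁻¹, ξ * t⁻¹ ^ 2, ?_, fun h => ?_⟩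
  · field_simp
    linear_combination (t ^ 2 - t ^ 4 - ξ) * h2 - hξt
  · exact inv_ne_zero ht (pow_eq_zero_iff two_ne_zero |>.mp (by linear_combination h + 2 * h2))

theorem exists_isSquare_traceDisc_of_three_eq_zero (h3 : (3 : F) = 0)
    (hi : ¬IsSquare (-1 : F)) (hq : 3 < Fintype.card F) :
    ∃ s : F, s ^ 2 ≠ 4 ∧ IsSquare (traceDisc s) := by
  classical
  obtain ⟨v, -, hv⟩ := Finset.exists_mem_notMem_of_card_lt_card
    (s := ({0, 1, -1} : Finset F)) (t := Finset.univ)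
    (by rw [Finset.card_univ]; exact Finset.card_le_three.trans_lt hq)
  simp only [Finset.mem_insert, Finset.mem_singleton, not_or] at hv
  obtain ⟨hv0, hv1, hv2⟩ := hv
  set r := v ^ 2 - 1 with hr
  have hr0 : r ≠ 0 := fun h => by
    rcases mul_eq_zero.mp (by linear_combination h - hr : (v - 1) * (v + 1) = 0) with h | h
    · exact hv1 (by linear_combination h)
    · exact hv2 (by linear_combination h)
  have hr1 : r ≠ 1 := fun h => hi ⟨v, by linear_combination hr - h - h3⟩
  by_cases hD : IsSquare (traceDisc r)
  · refine ⟨r, fun h => ?_, hD⟩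
    rcases mul_eq_zero.mp (by linear_combination h + h3 : (r - 1) * (r + 1) = 0) with h | h
    · exact hr1 (by linear_combination h)
    · exact hv0 (pow_eq_zero_iff two_ne_zero |>.mp (by linear_combination h))
  · refine ⟨-1 - r⁻¹, fun h => hr1 ?_, ?_⟩
    · field_simp at h
      linear_combination -h + (r - r ^ 2) * h3
    · obtain ⟨w, hw⟩ := FiniteField.isSquare_mul_of_not_isSquare hi hD
      refine ⟨w / (r ^ 2 * v), ?_⟩
      rw [div_mul_div_comm, eq_div_iff (mul_ne_zero (mul_ne_zero (pow_ne_zero 2 hr0) hv0)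
        (mul_ne_zero (pow_ne_zero 2 hr0) hv0))]
      linear_combination traceDisc_neg_one_sub_inv h3 hr0 + hw
        - traceDisc (-1 - r⁻¹) * r ^ 4 * hr

theorem exists_isSquare_traceDisc_of_three_ne_zero (h2 : (2 : F) ≠ 0) (h3 : (3 : F) ≠ 0)
    (h8 : ¬IsSquare (8 : F)) : ∃ s : F, s ^ 2 ≠ 4 ∧ IsSquare (traceDisc s) := by
  by_cases h40 : IsSquare (40 : F)
  · obtain ⟨r, hr⟩ := h40
    obtain ⟨i, hi⟩ : ∃ i : F, 3 * i = 1 := ⟨3⁻¹, mul_inv_cancel₀ h3⟩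
    refine ⟨-2 * i, fun h => h2 (pow_eq_zero_iff (n := 5) (by norm_num) |>.mp ?_), 2 * r * i ^ 2, ?_⟩
    · linear_combination -9 * h + 4 * (3 * i + 1) * hi
    · rw [traceDisc]
      linear_combination 4 * i ^ 4 * hr + (-48 * i ^ 3 - 16 * i ^ 2 - 16 * i - 8) * hi
  · have h5 : IsSquare (5 : F) := by
      by_contra h5
      exact h40 (by simpa [← show (8 : F) * 5 = 40 by norm_num] using
        FiniteField.isSquare_mul_of_not_isSquare h8 h5)
    refine ⟨-3, fun h => h40 ⟨0, by linear_combination 8 * h⟩, ?_⟩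
    rw [traceDisc]
    convert h5 using 1
    norm_num

theorem exists_isSquare_traceDisc (h2 : (2 : F) ≠ 0) (hq : 3 < Fintype.card F) :
    ∃ s : F, s ^ 2 ≠ 4 ∧ IsSquare (traceDisc s) := by
  by_cases h8 : IsSquare (8 : F)
  · refine ⟨0, fun h => h2 (pow_eq_zero_iff two_ne_zero |>.mp (by linear_combination -h)), ?_⟩
    simpa [traceDisc] using h8
  by_cases h3 : (3 : F) = 0
  · exact exists_isSquare_traceDisc_of_three_eq_zero h3
      (fun h => h8 (by convert h using 1; linear_combination 3 * h3)) hq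
  · exact exists_isSquare_traceDisc_of_three_ne_zero h2 h3 h8

theorem exists_trace_curve (hq : 3 < Fintype.card F) :
    ∃ s γ : F, γ ^ 2 - s ^ 2 * γ + 2 * s ^ 2 - s - 2 = 0 ∧ s ^ 2 ≠ 4 := by
  by_cases h2 : (2 : F) = 0
  · exact exists_trace_curve_of_two_eq_zero h2 (by omega)
  · obtain ⟨s, hs, hD⟩ := exists_isSquare_traceDisc h2 hq
    obtain ⟨γ, hγ⟩ := exists_trace_curve_of_isSquare_traceDisc h2 hD
    exact ⟨s, γ, hγ, hs⟩

end TraceCurve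

open Matrix.SpecialLinearGroup

/-- For every finite field `F` with more than 3 elements (i.e. `q > 3` a prime power),
the verbal dynamical system `(x, y, u) ↦ (x, y, [x u x⁻¹, y u y⁻¹])` on `SL(2, F_q)³`
has a fixed point outside the forbidden set `G × G × {1}`: there are `x, y, u` with
`u ≠ 1` and `[x u x⁻¹, y u y⁻¹] = u`. -/
theorem stmt0 (F : Type*) [Field F] [Fintype F] (hq : 3 < Fintype.card F) :
    ∃ x y u : Matrix.SpecialLinearGroup (Fin 2) F,
      u ≠ 1 ∧ ⁅x * u * x⁻¹, y * u * y⁻¹⁆ = u := by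
  obtain ⟨s, γ, hγ, hs⟩ := exists_trace_curve hq
  obtain ⟨B, hB, hAB⟩ := exists_trace_eq_and_trace_companion_mul_eq hs γ
  have hu : ((⁅companion s, B⁆ : SL(2, F)) : Matrix (Fin 2) (Fin 2) F).trace = s := by
    rw [trace_commutator, trace_companion, hB, hAB]
    linear_combination hγ
  have hne : ⁅companion s, B⁆ ≠ 1 := fun h => hs (by
    simp only [h, coe_one, Matrix.trace_one, Fintype.card_fin, Nat.cast_ofNat] at hu
    rw [← hu]
    norm_num)
  obtain ⟨x, y, hxy⟩ := exists_conj_commutator_eq_of_isConj rfl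
    (isConj_of_trace_eq (hu.trans (trace_companion s).symm) (by rwa [hu]))
    (isConj_of_trace_eq (hu.trans hB.symm) (by rwa [hu]))
  exact ⟨x, y, _, hne, hxy⟩
end

section
/- (Surjectivity Theorem for pairs.) Let F_q be any finite field and let (s₀, u₀, t₀) ∈ F_q³ be an arbitrary triple. Then there exist matrices x, y ∈ SL(2, F_q) such that tr(x) = s₀, tr(xy) = u₀ and tr(y) = t₀. In other words, the trace projection π : SL(2,F_q)² → F_q³, π(x,y) = (tr x, tr(xy), tr y), is surjective for every q. -/
/-!
If `z² - t z + 1` has a root `r` in `F`, take `y` upper triangular with diagonal `(r, r⁻¹)`;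
then `x` is found by solving linear equations. Otherwise take for `y` the companion matrix of
`z² - t z + 1`. Prescribing `tr x` and `tr xy` leaves two free entries `c, d` of `x`, and
`det x = 1` becomes the affine conic `c² - t c d + d² + u c - s d + 1 = 0`, whose points at
infinity are the roots of `z² - t z + 1`. By Chevalley's theorem the projective conic has an
`F`-point, which is therefore affine.
-/

open Matrix

/-- Chevalley's theorem. -/
theorem MvPolynomial.IsHomogeneous.exists_ne_zero_eval_eq_zero {K σ : Type*} [Field K] [Fintype K]
    [Fintype σ] {f : MvPolynomial σ K} {n : ℕ} (hf : f.IsHomogeneous n) (hn : 0 < n)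
    (hlt : n < Fintype.card σ) : ∃ x ≠ 0, MvPolynomial.eval x f = 0 := by
  classical
  have h0 : MvPolynomial.eval 0 f = 0 := by
    rw [MvPolynomial.eval_zero, MvPolynomial.constantCoeff_eq]
    exact hf.coeff_eq_zero (by simpa using hn.ne)
  obtain ⟨p, _⟩ := CharP.exists K
  have hdvd := char_dvd_card_solutions p (hf.totalDegree_le.trans_lt hlt)
  have hcard : 1 < Fintype.card { x : σ → K // MvPolynomial.eval x f = 0 } :=
    (CharP.char_is_prime K p).one_lt.trans_le
      (Nat.le_of_dvd (Fintype.card_pos_iff.mpr ⟨⟨0, h0⟩⟩) hdvd)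
  obtain ⟨⟨x, hx⟩, hne⟩ := Fintype.exists_ne_of_one_lt_card hcard ⟨0, h0⟩
  exact ⟨x, fun h => hne (Subtype.ext h), hx⟩

section Conic

open MvPolynomial

variable {F : Type*} [Field F] [Fintype F]

theorem exists_conic_point_of_forall_ne_zero (s u t : F) (ht : ∀ z : F, z ^ 2 - t * z + 1 ≠ 0) :
    ∃ c d : F, c ^ 2 - t * c * d + d ^ 2 + u * c - s * d + 1 = 0 := by
  set Q : MvPolynomial (Fin 3) F :=
    X 0 ^ 2 - C t * X 0 * X 1 + X 1 ^ 2 + C u * X 0 * X 2 - C s * X 1 * X 2 + X 2 ^ 2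
  have hsq (i : Fin 3) : (X i ^ 2 : MvPolynomial (Fin 3) F).IsHomogeneous 2 :=
    (isHomogeneous_X F i).pow 2
  have hmon (a : F) (i j : Fin 3) : (C a * X i * X j : MvPolynomial (Fin 3) F).IsHomogeneous 2 :=
    (isHomogeneous_C_mul_X a i).mul (isHomogeneous_X F j)
  have hQ : Q.IsHomogeneous 2 :=
    (((((hsq 0).sub (hmon t 0 1)).add (hsq 1)).add (hmon u 0 2)).sub (hmon s 1 2)).add (hsq 2)
  obtain ⟨v, hv0, hv⟩ := hQ.exists_ne_zero_eval_eq_zero two_pos (by simp)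
  simp only [Q, map_add, map_sub, map_mul, map_pow, eval_X, eval_C] at hv
  have hz : v 2 ≠ 0 := by
    intro hz
    have hd : v 1 ≠ 0 := by
      intro hd
      have hc : v 0 = 0 := by simpa [hz, hd] using hv
      exact hv0 (funext fun i => by fin_cases i <;> assumption)
    apply ht (v 0 / v 1)
    field_simp
    rw [hz] at hv
    linear_combination hv
  exact ⟨v 0 / v 2, v 1 / v 2, by field_simp; linear_combination hv⟩

end Conic

section TraceMap

variable {F : Type*} [Field F]

def traceMap (p : SpecialLinearGroup (Fin 2) F × SpecialLinearGroup (Fin 2) F) : F × F × F :=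
  ((p.1 : Matrix (Fin 2) (Fin 2) F).trace, ((p.1 * p.2 : SpecialLinearGroup (Fin 2) F) :
    Matrix (Fin 2) (Fin 2) F).trace, (p.2 : Matrix (Fin 2) (Fin 2) F).trace)

theorem mem_range_traceMap {s u t : F} (A B : Matrix (Fin 2) (Fin 2) F) (hA : A.det = 1)
    (hB : B.det = 1) (hs : A.trace = s) (hu : (A * B).trace = u) (ht : B.trace = t) :
    (s, u, t) ∈ Set.range traceMap :=
  ⟨(⟨A, hA⟩, ⟨B, hB⟩), by rw [← hs, ← hu, ← ht]; rfl⟩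

theorem mem_range_traceMap_of_root (s u : F) {t r : F} (hr : r ^ 2 - t * r + 1 = 0) :
    (s, u, t) ∈ Set.range traceMap := by
  by_cases hdiag : r = t - r
  · by_cases hu : u = r * s
    · refine mem_range_traceMap !![0, -1; 1, s] !![r, 0; 0, t - r] ?_ ?_ ?_ ?_ ?_ <;>
        simp only [det_fin_two_of, mul_fin_two, trace_fin_two_of] <;> grind
    · -- `y = ±1` would force `tr xy = r tr x`, so take `y = ±` a nontrivial unipotent.
      set c := u - r * s
      have hc : c ≠ 0 := sub_ne_zero.mpr hu
      refine mem_range_traceMap !![0, -c⁻¹; c, s] !![r, 1; 0, t - r] ?_ ?_ ?_ ?_ ?_ <;>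
        simp only [det_fin_two_of, mul_fin_two, trace_fin_two_of] <;> grind
  · set a := (u - (t - r) * s) / (r - (t - r))
    have hne : r - (t - r) ≠ 0 := sub_ne_zero.mpr hdiag
    refine mem_range_traceMap !![a, a * (s - a) - 1; 1, s - a] !![r, 0; 0, t - r]
      ?_ ?_ ?_ ?_ ?_ <;> simp only [det_fin_two_of, mul_fin_two, trace_fin_two_of] <;> grind

theorem mem_range_traceMap_of_forall_ne_zero [Fintype F] (s u : F) {t : F}
    (ht : ∀ z : F, z ^ 2 - t * z + 1 ≠ 0) : (s, u, t) ∈ Set.range traceMap := by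
  obtain ⟨c, d, hcd⟩ := exists_conic_point_of_forall_ne_zero s u t ht
  refine mem_range_traceMap !![s - d, c + u - t * d; c, d] !![0, -1; 1, t] ?_ ?_ ?_ ?_ ?_ <;>
    simp only [det_fin_two_of, mul_fin_two, trace_fin_two_of] <;> grind

theorem traceMap_surjective [Fintype F] : Function.Surjective (traceMap (F := F)) := by
  rintro ⟨s, u, t⟩
  by_cases h : ∃ r : F, r ^ 2 - t * r + 1 = 0
  · obtain ⟨r, hr⟩ := h
    exact mem_range_traceMap_of_root s u hr
  · exact mem_range_traceMap_of_forall_ne_zero s u (not_exists.mp h)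

end TraceMap

/-- Surjectivity Theorem for pairs: over any finite field `F_q`, the trace projection
`π : SL(2,F_q)² → F_q³`, `π(x,y) = (tr x, tr(xy), tr y)`, is surjective. -/
theorem stmt2 (F : Type*) [Field F] [Fintype F] (s₀ u₀ t₀ : F) :
    ∃ x y : Matrix.SpecialLinearGroup (Fin 2) F,
      Matrix.trace (x : Matrix (Fin 2) (Fin 2) F) = s₀ ∧
      Matrix.trace ((x * y : Matrix.SpecialLinearGroup (Fin 2) F) : Matrix (Fin 2) (Fin 2) F) = u₀ ∧
      Matrix.trace (y : Matrix (Fin 2) (Fin 2) F) = t₀ := by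
  obtain ⟨⟨x, y⟩, h⟩ := traceMap_surjective (s₀, u₀, t₀)
  simp only [traceMap, Prod.mk.injEq] at h
  exact ⟨x, y, h⟩
end

section
/- (Surjectivity Theorem for triples.) Let F_q be any finite field and let (a₁, a₂, a₃, a₁₂, a₁₃, a₂₃, a₁₂₃) ∈ F_q⁷ satisfy the Fricke–Vogt relation a₁₂₃² − a₁₂₃(a₁₂ a₃ + a₁₃ a₂ + a₂₃ a₁ − a₁ a₂ a₃) + (a₁² + a₂² + a₃² + a₁₂² + a₁₃² + a₂₃² − a₁ a₂ a₁₂ − a₁ a₃ a₁₃ − a₂ a₃ a₂₃ + a₁₂ a₁₃ a₂₃ − 4) = 0. Then there exist matrices x, y, u ∈ SL(2, F_q) with tr(x) = a₁, tr(y) = a₂, tr(u) = a₃, tr(xy) = a₁₂, tr(xu) = a₁₃, tr(yu) = a₂₃ and tr(xyu) = a₁₂₃. That is, the trace projection π : SL(2,F_q)³ → Z(F_q) onto the hypersurface Z ⊂ A⁷ defined by this relation is surjective for every q. -/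
open Matrix Polynomial

set_option linter.unusedSectionVars false
set_option linter.unusedVariables false
set_option linter.unnecessarySeqFocus false
set_option maxHeartbeats 1600000

namespace Stmt3Aux

variable {F : Type*} [Field F] [Fintype F]


variable {F : Type*} [Field F] [Fintype F]

/-- build an SL2 element from entries -/
def sl2 (a b c d : F) (h : a * d - b * c = 1) : Matrix.SpecialLinearGroup (Fin 2) F :=
  ⟨!![a, b; c, d], by rw [Matrix.det_fin_two_of]; exact h⟩

@[simp] lemma sl2_coe (a b c d : F) (h) :
    (sl2 a b c d h : Matrix (Fin 2) (Fin 2) F) = !![a, b; c, d] := rfl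

lemma conic_point (b₁ b₂ b₁₂ : F)
    (h : b₁ ^ 2 - 4 ≠ 0 ∨ ∃ ε : F, ε ^ 2 = 1 ∧ b₁ = 2 * ε ∧ b₁₂ - ε * b₂ ≠ 0) :
    ∃ p q : F, p * (b₂ - p) - q * (b₁ * p + q - b₁₂) = 1 := by
  rcases h with h4 | ⟨ε, hε, hb₁, hne⟩
  · by_cases h2 : ringChar F = 2
    · -- characteristic 2
      have h2' : (2 : F) = 0 := by
        have := ringChar.Nat.cast_ringChar (R := F); rw [h2] at this; exact_mod_cast this
      have hb₁ : b₁ ≠ 0 := by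
        intro h0
        exact h4 (by rw [h0]; linear_combination (-2 : F) * h2')
      set p : F := b₁⁻¹ * b₁₂ with hpdef
      have hb : b₁ * p = b₁₂ := by
        rw [hpdef, ← mul_assoc, mul_inv_cancel₀ hb₁, one_mul]
      obtain ⟨r, hr⟩ := FiniteField.isSquare_of_char_two h2 (p ^ 2 + b₂ * p + 1)
      exact ⟨p, r, by linear_combination (-r) * hb + (-1 : F) * hr + (p * b₂ - r * r) * h2'⟩
    · -- odd characteristic
      have h2' : (2 : F) ≠ 0 := Ring.two_ne_zero h2
      have h4' : (4 : F) ≠ 0 := by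
        intro h; apply h2'; have : (2 : F) * 2 = 0 := by linear_combination h
        rcases mul_eq_zero.1 this with h | h <;> exact h
      obtain ⟨P, q, hPQ⟩ := FiniteField.exists_root_sum_quadratic
        (f := C (-1 : F) * X ^ 2 + C 0 * X + C (b₂ ^ 2 - 4))
        (g := C (b₁ ^ 2 - 4) * X ^ 2 + C (4 * b₁₂ - 2 * b₁ * b₂) * X + C 0)
        (degree_quadratic (by norm_num)) (degree_quadratic h4)
        (FiniteField.odd_card_of_char_ne_two h2)
      simp only [eval_add, eval_mul, eval_pow, eval_C, eval_X] at hPQ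
      have hPQ' : (b₂ ^ 2 - 4) - P ^ 2 + (b₁ ^ 2 - 4) * q ^ 2 + (4 * b₁₂ - 2 * b₁ * b₂) * q = 0 := by
        linear_combination hPQ
      refine ⟨(P - b₁ * q + b₂) / 2, q, ?_⟩
      set p : F := (P - b₁ * q + b₂) / 2 with hpdef
      have hp : 2 * p = P - b₁ * q + b₂ := by rw [hpdef]; field_simp
      have h4eq : 4 * (p * (b₂ - p) - q * (b₁ * p + q - b₁₂)) = 4 * 1 := by
        linear_combination hPQ' - (P + 2 * p + b₁ * q - b₂) * hp
      exact mul_left_cancel₀ h4' h4eq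
  · -- b₁ = 2ε case
    have hne' : (b₁₂ - ε * b₂) ≠ 0 := hne
    refine ⟨-ε * (b₁₂ - ε * b₂)⁻¹, (b₁₂ - ε * b₂)⁻¹, ?_⟩
    set q : F := (b₁₂ - ε * b₂)⁻¹ with hqdef
    have hq : (b₁₂ - ε * b₂) * q = 1 := mul_inv_cancel₀ hne'
    linear_combination hq + ε * q ^ 2 * hb₁ + q ^ 2 * hε

lemma eps_of_sq (b₁ : F) (h4 : b₁ ^ 2 - 4 = 0) : ∃ ε : F, ε ^ 2 = 1 ∧ b₁ = 2 * ε := by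
  have : (b₁ - 2) * (b₁ + 2) = 0 := by linear_combination h4
  rcases mul_eq_zero.1 this with h | h
  · exact ⟨1, by norm_num, by linear_combination h⟩
  · exact ⟨-1, by norm_num, by linear_combination h⟩

/-- the trace of a product of two explicit 2×2 matrices -/
lemma trace_mul2 (a b c d e f g h : F) :
    Matrix.trace (!![a, b; c, d] * !![e, f; g, h]) = a * e + b * g + c * f + d * h := by
  rw [Matrix.mul_fin_two, Matrix.trace_fin_two_of]; ring

/-- Pair surjectivity: any triple of traces is realizable by a pair in SL₂. -/
lemma pair_exists (b₁ b₂ b₁₂ : F) :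
    ∃ y u : Matrix.SpecialLinearGroup (Fin 2) F,
      Matrix.trace (y : Matrix (Fin 2) (Fin 2) F) = b₁ ∧
      Matrix.trace (u : Matrix (Fin 2) (Fin 2) F) = b₂ ∧
      Matrix.trace ((y * u : Matrix.SpecialLinearGroup (Fin 2) F) : Matrix (Fin 2) (Fin 2) F)
        = b₁₂ := by
  have main : (∃ p q : F, p * (b₂ - p) - q * (b₁ * p + q - b₁₂) = 1) →
      ∃ y u : Matrix.SpecialLinearGroup (Fin 2) F,
      Matrix.trace (y : Matrix (Fin 2) (Fin 2) F) = b₁ ∧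
      Matrix.trace (u : Matrix (Fin 2) (Fin 2) F) = b₂ ∧
      Matrix.trace ((y * u : Matrix.SpecialLinearGroup (Fin 2) F) : Matrix (Fin 2) (Fin 2) F)
        = b₁₂ := by
    rintro ⟨p, q, hpq⟩
    refine ⟨sl2 b₁ (-1) 1 0 (by ring), sl2 p q (b₁ * p + q - b₁₂) (b₂ - p) (by linear_combination hpq), ?_, ?_, ?_⟩
    · rw [sl2_coe, Matrix.trace_fin_two_of]; ring
    · rw [sl2_coe, Matrix.trace_fin_two_of]; ring
    · rw [Matrix.SpecialLinearGroup.coe_mul, sl2_coe, sl2_coe, trace_mul2]; ring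
  by_cases h4 : b₁ ^ 2 - 4 = 0
  · obtain ⟨ε, hε, hb₁⟩ := eps_of_sq b₁ h4
    by_cases hb : b₁₂ - ε * b₂ = 0
    · -- y = ε·1, u = companion
      refine ⟨sl2 ε 0 0 ε (by linear_combination hε), sl2 b₂ (-1) 1 0 (by ring), ?_, ?_, ?_⟩
      · rw [sl2_coe, Matrix.trace_fin_two_of]; linear_combination -hb₁
      · rw [sl2_coe, Matrix.trace_fin_two_of]; ring
      · rw [Matrix.SpecialLinearGroup.coe_mul, sl2_coe, sl2_coe, trace_mul2]
        linear_combination -hb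
    · exact main (conic_point b₁ b₂ b₁₂ (Or.inr ⟨ε, hε, hb₁, hb⟩))
  · exact main (conic_point b₁ b₂ b₁₂ (Or.inl h4))


lemma main12 (a₁ a₂ a₃ a₁₂ a₁₃ a₂₃ a₁₂₃ : F)
    (hrel : a₁₂₃ ^ 2 - a₁₂₃ * (a₁₂ * a₃ + a₁₃ * a₂ + a₂₃ * a₁ - a₁ * a₂ * a₃)
      + (a₁ ^ 2 + a₂ ^ 2 + a₃ ^ 2 + a₁₂ ^ 2 + a₁₃ ^ 2 + a₂₃ ^ 2
        - a₁ * a₂ * a₁₂ - a₁ * a₃ * a₁₃ - a₂ * a₃ * a₂₃ + a₁₂ * a₁₃ * a₂₃ - 4) = 0)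
    (hΔ : a₁^2 + a₂^2 + a₁₂^2 - a₁*a₂*a₁₂ - 4 ≠ 0) :
    ∃ x y u : Matrix.SpecialLinearGroup (Fin 2) F,
      Matrix.trace (x : Matrix (Fin 2) (Fin 2) F) = a₁ ∧
      Matrix.trace (y : Matrix (Fin 2) (Fin 2) F) = a₂ ∧
      Matrix.trace (u : Matrix (Fin 2) (Fin 2) F) = a₃ ∧
      Matrix.trace ((x * y : Matrix.SpecialLinearGroup (Fin 2) F) : Matrix (Fin 2) (Fin 2) F) = a₁₂ ∧
      Matrix.trace ((x * u : Matrix.SpecialLinearGroup (Fin 2) F) : Matrix (Fin 2) (Fin 2) F) = a₁₃ ∧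
      Matrix.trace ((y * u : Matrix.SpecialLinearGroup (Fin 2) F) : Matrix (Fin 2) (Fin 2) F) = a₂₃ ∧
      Matrix.trace ((x * y * u : Matrix.SpecialLinearGroup (Fin 2) F) : Matrix (Fin 2) (Fin 2) F) = a₁₂₃ := by
  have hcp : ∃ p q : F, p * (a₂ - p) - q * (a₁ * p + q - a₁₂) = 1 := by
    by_cases h4 : a₁ ^ 2 - 4 = 0
    · obtain ⟨ε, hε, hb⟩ := eps_of_sq a₁ h4
      refine conic_point a₁ a₂ a₁₂ (Or.inr ⟨ε, hε, hb, fun h0 => hΔ ?_⟩)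
      linear_combination (a₁ - a₁₂*a₂ + 2*ε) * hb + (a₁₂ - ε*a₂) * h0 + (-a₂^2 + 4) * hε
    · exact conic_point _ _ _ (Or.inl h4)
  obtain ⟨p, q, hpq⟩ := hcp
  obtain ⟨m, hm⟩ : ∃ m : F, (a₁^2 + a₂^2 + a₁₂^2 - a₁*a₂*a₁₂ - 4) * m = ((a₂₃ + q*a₁₃ - (a₂ - p)*a₃) * (2*p + a₁*q - a₂) - (a₁*p + 2*q - a₁₂) * (a₁₂₃ + (a₁*q - (a₂ - p))*a₁₃ - q*a₃)) :=
    ⟨((a₂₃ + q*a₁₃ - (a₂ - p)*a₃) * (2*p + a₁*q - a₂) - (a₁*p + 2*q - a₁₂) * (a₁₂₃ + (a₁*q - (a₂ - p))*a₁₃ - q*a₃)) / (a₁^2 + a₂^2 + a₁₂^2 - a₁*a₂*a₁₂ - 4), by field_simp⟩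
  obtain ⟨n, hn⟩ : ∃ n : F, (a₁^2 + a₂^2 + a₁₂^2 - a₁*a₂*a₁₂ - 4) * n = ((2*p + a₁*q - a₂) * (a₁₂₃ + (a₁*q - (a₂ - p))*a₁₃ - q*a₃) - (a₁₂ - 2*q + a₁^2*q - a₁*a₂ + a₁*p) * (a₂₃ + q*a₁₃ - (a₂ - p)*a₃)) :=
    ⟨((2*p + a₁*q - a₂) * (a₁₂₃ + (a₁*q - (a₂ - p))*a₁₃ - q*a₃) - (a₁₂ - 2*q + a₁^2*q - a₁*a₂ + a₁*p) * (a₂₃ + q*a₁₃ - (a₂ - p)*a₃)) / (a₁^2 + a₂^2 + a₁₂^2 - a₁*a₂*a₁₂ - 4), by field_simp⟩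
  have hdet2 : (a₁^2 + a₂^2 + a₁₂^2 - a₁*a₂*a₁₂ - 4)^2 * (m * (a₃ - m) - n * (a₁ * m + n - a₁₃)) = (a₁^2 + a₂^2 + a₁₂^2 - a₁*a₂*a₁₂ - 4)^2 * 1 := by
    linear_combination ((-1)*m*a₁^2 + 1*m*a₁*a₂*a₁₂ + (-1)*m*a₂^2 + (-1)*m*a₁₂^2 + 4*m + (-1)*a₁₂₃*q*a₁^2 + 2*a₁₂₃*q + 1*a₁₂₃*a₁*a₂ + (-1)*a₁₂₃*a₁*p + (-1)*a₁₂₃*a₁₂ + 1*q^2*a₁^2*a₃ + (-1)*q^2*a₁*a₁₃ + (-2)*q^2*a₃ + (-1)*q*a₁^3*a₂*a₃ + 1*q*a₁^3*a₃*p + 1*q*a₁^3*a₂₃ + 1*q*a₁^2*a₂*a₁₃ + (-1)*q*a₁^2*a₁₃*p + 2*q*a₁*a₂*a₃ + (-2)*q*a₁*a₃*p + (-3)*q*a₁*a₂₃ + (-1)*q*a₂*a₁₃ + 1*q*a₃*a₁₂ + 1*a₁^2*a₂^2*a₃ + (-2)*a₁^2*a₂*a₃*p + (-1)*a₁^2*a₂*a₂₃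 + 1*a₁^2*a₃*p^2 + 1*a₁^2*a₃ + 1*a₁^2*a₂₃*p + (-1)*a₁*a₂^2*a₁₃ + (-2)*a₁*a₂*a₃*a₁₂ + 2*a₁*a₂*a₁₃*p + 1*a₁*a₃*a₁₂*p + 1*a₁*a₁₂*a₂₃ + (-1)*a₁*a₁₃*p^2 + 3*a₂*a₃*p + 1*a₂*a₁₂*a₁₃ + 1*a₂*a₂₃ + 1*a₃*a₁₂^2 + (-2)*a₃*p^2 + (-4)*a₃ + (-1)*a₁₂*a₁₃*p + (-2)*a₂₃*p) * hm + ((-1)*m*a₁^3 + 1*m*a₁^2*a₂*a₁₂ + (-1)*m*a₁*a₂^2 + (-1)*m*a₁*a₁₂^2 + 4*m*a₁ + (-1)*n*a₁^2 + 1*n*a₁*a₂*a₁₂ + (-1)*n*a₂^2 + (-1)*n*a₁₂^2 + 4*n + (-1)*a₁₂₃*q*a₁ + 1*a₁₂₃*a₂ + (-2)*a₁₂₃*p + 1*q^2*a₁*a₃ + (-2)*q^2*a₁₃ + (-1)*q*a₁^2*a₂*a₃ + 1*q*a₁^2*a₃*p + 1*q*a₁^2*a₂₃ + 1*q*a₁*a₂*a₁₃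 + (-2)*q*a₁*a₁₃*p + 1*q*a₂*a₃ + 1*q*a₁₂*a₁₃ + (-2)*q*a₂₃ + 1*a₁^2*a₁₃ + 1*a₁*a₂^2*a₃ + (-2)*a₁*a₂*a₃*p + (-1)*a₁*a₂*a₁₂*a₁₃ + (-1)*a₁*a₂*a₂₃ + 1*a₁*a₃*p^2 + 1*a₁*a₂₃*p + (-1)*a₂*a₃*a₁₂ + 3*a₂*a₁₃*p + 1*a₃*a₁₂*p + 1*a₁₂^2*a₁₃ + 1*a₁₂*a₂₃ + (-2)*a₁₃*p^2 + (-4)*a₁₃) * hn + (1*q^2*a₁^2 + (-4)*q^2 + 1*q*a₁^3*p + (-1)*q*a₁^2*a₁₂ + (-4)*q*a₁*p + 4*q*a₁₂ + (-1)*a₁^2*a₂*p + 1*a₁^2*p^2 + 1*a₁*a₂*a₁₂ + (-1)*a₂^2 + 4*a₂*p + (-1)*a₁₂^2 + (-4)*p^2) * hrel + ((-1)*a₁₂₃*q*a₁^3*a₁₃ + 2*a₁₂₃*q*a₁^2*a₃ + 4*a₁₂₃*q*a₁*a₁₃ + (-8)*a₁₂₃*q*a₃ + 1*a₁₂₃*a₁^3*a₃*p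 + 1*a₁₂₃*a₁^2*a₂*a₁₃ + (-1)*a₁₂₃*a₁^2*a₃*a₁₂ + (-2)*a₁₂₃*a₁^2*a₁₃*p + (-4)*a₁₂₃*a₁*a₃*p + (-4)*a₁₂₃*a₂*a₁₃ + 4*a₁₂₃*a₃*a₁₂ + 8*a₁₂₃*a₁₃*p + 1*q^2*a₁^3*a₃*a₁₃ + (-1)*q^2*a₁^2*a₃^2 + (-1)*q^2*a₁^2*a₁₃^2 + (-4)*q^2*a₁*a₃*a₁₃ + 4*q^2*a₃^2 + 4*q^2*a₁₃^2 + (-1)*q*a₁^4*a₂*a₃*a₁₃ + 1*q*a₁^4*a₃*a₁₃*p + 1*q*a₁^4*a₁₃*a₂₃ + 1*q*a₁^3*a₂*a₃^2 + 1*q*a₁^3*a₂*a₁₃^2 + (-1)*q*a₁^3*a₃^2*p + (-1)*q*a₁^3*a₃*a₂₃ + (-1)*q*a₁^3*a₁₃^2*p + 4*q*a₁^2*a₂*a₃*a₁₃ + (-4)*q*a₁^2*a₃*a₁₃*p + (-6)*q*a₁^2*a₁₃*a₂₃ + (-4)*q*a₁*a₂*a₃^2 + (-4)*q*a₁*a₂*a₁₃^2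 + 4*q*a₁*a₃^2*p + 4*q*a₁*a₃*a₂₃ + 4*q*a₁*a₁₃^2*p + 8*q*a₁₃*a₂₃ + 1*a₁^4 + 1*a₁^3*a₂^2*a₃*a₁₃ + (-2)*a₁^3*a₂*a₃*a₁₃*p + (-1)*a₁^3*a₂*a₁₂ + (-1)*a₁^3*a₂*a₁₃*a₂₃ + 1*a₁^3*a₃*a₁₃*p^2 + 1*a₁^3*a₁₃*a₂₃*p + (-1)*a₁^2*a₂^2*a₃^2 + (-1)*a₁^2*a₂^2*a₁₃^2 + 1*a₁^2*a₂^2 + 2*a₁^2*a₂*a₃^2*p + (-1)*a₁^2*a₂*a₃*a₁₂*a₁₃ + 1*a₁^2*a₂*a₃*a₂₃ + 2*a₁^2*a₂*a₁₃^2*p + (-1)*a₁^2*a₃^2*p^2 + (-2)*a₁^2*a₃*a₂₃*p + 1*a₁^2*a₁₂^2 + 1*a₁^2*a₁₂*a₁₃*a₂₃ + (-1)*a₁^2*a₁₃^2*p^2 + (-8)*a₁^2 + (-3)*a₁*a₂^2*a₃*a₁₃ + 1*a₁*a₂*a₃^2*a₁₂ + 8*a₁*a₂*a₃*a₁₃*p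 + 1*a₁*a₂*a₁₂*a₁₃^2 + 4*a₁*a₂*a₁₂ + 4*a₁*a₂*a₁₃*a₂₃ + 1*a₁*a₃*a₁₂^2*a₁₃ + (-4)*a₁*a₃*a₁₃*p^2 + (-4)*a₁*a₁₃*a₂₃*p + 3*a₂^2*a₃^2 + 3*a₂^2*a₁₃^2 + (-4)*a₂^2 + (-8)*a₂*a₃^2*p + (-4)*a₂*a₃*a₂₃ + (-8)*a₂*a₁₃^2*p + (-1)*a₃^2*a₁₂^2 + 4*a₃^2*p^2 + 8*a₃*a₂₃*p + (-1)*a₁₂^2*a₁₃^2 + (-4)*a₁₂^2 + (-4)*a₁₂*a₁₃*a₂₃ + 4*a₁₃^2*p^2 + 16) * hpq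
  have hdet : m * (a₃ - m) - n * (a₁ * m + n - a₁₃) = 1 :=
    mul_left_cancel₀ (pow_ne_zero 2 hΔ) hdet2
  refine ⟨sl2 a₁ (-1) 1 0 (by ring),
    sl2 p q (a₁*p + q - a₁₂) (a₂ - p) (by linear_combination hpq),
    sl2 m n (a₁*m + n - a₁₃) (a₃ - m) hdet, ?_, ?_, ?_, ?_, ?_, ?_, ?_⟩
  · rw [sl2_coe, Matrix.trace_fin_two_of]; ring
  · rw [sl2_coe, Matrix.trace_fin_two_of]; ring
  · rw [sl2_coe, Matrix.trace_fin_two_of]; ring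
  · rw [Matrix.SpecialLinearGroup.coe_mul, sl2_coe, sl2_coe, trace_mul2]; ring
  · rw [Matrix.SpecialLinearGroup.coe_mul, sl2_coe, sl2_coe, trace_mul2]; ring
  · rw [Matrix.SpecialLinearGroup.coe_mul, sl2_coe, sl2_coe, trace_mul2]
    refine mul_left_cancel₀ hΔ ?_
    linear_combination (1*q*a₁ + (-1)*a₂ + 2*p) * hm + (2*q + 1*a₁*p + (-1)*a₁₂) * hn + (1*q*a₁^2*a₁₃ + (-4)*q*a₁₃ + (-1)*a₁^2*a₂*a₃ + 1*a₁^2*a₃*p + 1*a₁^2*a₂₃ + 4*a₂*a₃ + (-4)*a₃*p + (-4)*a₂₃) * hpq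
  · rw [Matrix.SpecialLinearGroup.coe_mul, Matrix.SpecialLinearGroup.coe_mul, sl2_coe, sl2_coe, sl2_coe,
      Matrix.mul_fin_two, trace_mul2]
    refine mul_left_cancel₀ hΔ ?_
    linear_combination (1*q*a₁^2 + (-2)*q + (-1)*a₁*a₂ + 1*a₁*p + 1*a₁₂) * hm + (1*q*a₁ + (-1)*a₂ + 2*p) * hn + (1*a₁₂₃*a₁^2 + (-4)*a₁₂₃ + 1*q*a₁^3*a₁₃ + (-1)*q*a₁^2*a₃ + (-4)*q*a₁*a₁₃ + 4*q*a₃ + (-1)*a₁^2*a₂*a₁₃ + 1*a₁^2*a₁₃*p + 4*a₂*a₁₃ + (-4)*a₁₃*p) * hpq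


local notation "Ω" => AlgebraicClosure F

lemma phi_inj : Function.Injective (algebraMap F Ω) := (algebraMap F Ω).injective

lemma frob_fixed' (a : F) : (algebraMap F Ω a) ^ (Fintype.card F) = algebraMap F Ω a := by
  rw [← map_pow, FiniteField.pow_card]

lemma frob_hom : ∃ f : Ω →+* Ω, ∀ x, f x = x ^ Fintype.card F := by
  have hcp : CharP F (ringChar F) := ringChar.charP F
  have hp : (ringChar F).Prime := CharP.char_is_prime F (ringChar F)
  obtain ⟨n, hn, hcard⟩ := FiniteField.card F (ringChar F)
  haveI : CharP Ω (ringChar F) := charP_of_injective_algebraMap (phi_inj (F := F)) (ringChar F)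
  haveI : ExpChar Ω (ringChar F) := ExpChar.prime hp
  refine ⟨iterateFrobenius Ω (ringChar F) n, fun x => ?_⟩
  rw [iterateFrobenius_def, hcard]

lemma mem_range_of_pow_card (ω : Ω) (h : ω ^ (Fintype.card F) = ω) :
    ∃ a : F, algebraMap F Ω a = ω := by
  classical
  by_contra hcon
  push_neg at hcon
  set qn := Fintype.card F with hqn
  have hq2 : 2 ≤ qn := Fintype.one_lt_card
  set g : Polynomial Ω := X ^ qn - X with hg
  have hdeg : g.natDegree = qn := by
    rw [hg]
    rw [Polynomial.natDegree_sub_eq_left_of_natDegree_lt] <;>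
      simp [Polynomial.natDegree_X_pow] <;> omega
  have hg0 : g ≠ 0 := by
    intro h0
    rw [h0, Polynomial.natDegree_zero] at hdeg
    omega
  set S : Finset Ω := insert ω (Finset.univ.image (algebraMap F Ω)) with hS
  have hcardS : S.card = qn + 1 := by
    rw [hS, Finset.card_insert_of_notMem (by
      simp only [Finset.mem_image, Finset.mem_univ, true_and]
      rintro ⟨a, ha⟩; exact hcon a ha)]
    rw [Finset.card_image_of_injective _ (phi_inj (F := F)), Finset.card_univ, hqn]
  have hroots : S ⊆ g.roots.toFinset := by
    intro s hs
    rw [Multiset.mem_toFinset, Polynomial.mem_roots hg0]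
    have hseq : s ^ qn = s := by
      rcases Finset.mem_insert.1 hs with h1 | h1
      · rw [h1]; exact h
      · simp only [Finset.mem_image, Finset.mem_univ, true_and] at h1
        obtain ⟨a, ha⟩ := h1
        rw [← ha]; exact frob_fixed' a
    simp [Polynomial.IsRoot, hg, hseq]
  have h1 : qn + 1 ≤ g.roots.toFinset.card := hcardS ▸ Finset.card_le_card hroots
  have h2 : g.roots.toFinset.card ≤ qn := by
    calc g.roots.toFinset.card ≤ Multiset.card g.roots := Multiset.toFinset_card_le _
    _ ≤ g.natDegree := Polynomial.card_roots' g
    _ = qn := hdeg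
  omega

lemma quad_root (a : F) :
    ∃ z : Ω, z ≠ 0 ∧ z * z - (algebraMap F Ω a) * z + 1 = 0 := by
  set A := algebraMap F Ω a with hA
  obtain ⟨z, hz⟩ := IsAlgClosed.exists_root (k := Ω) (C 1 * X ^ 2 + C (-A) * X + C 1)
    (by rw [degree_quadratic one_ne_zero]; exact two_ne_zero)
  simp only [Polynomial.IsRoot, eval_add, eval_mul, eval_pow, eval_C, eval_X, one_mul] at hz
  refine ⟨z, ?_, by linear_combination hz⟩
  intro h0
  rw [h0] at hz
  simp at hz

lemma inv_from_quad {a : F} {z : Ω} (hz0 : z ≠ 0)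
    (hz : z * z - (algebraMap F Ω a) * z + 1 = 0) :
    z⁻¹ = algebraMap F Ω a - z :=
  (eq_inv_of_mul_eq_one_right (by linear_combination -hz)).symm

lemma sum_inv_from_quad {a : F} {z : Ω} (hz0 : z ≠ 0)
    (hz : z * z - (algebraMap F Ω a) * z + 1 = 0) :
    z + z⁻¹ = algebraMap F Ω a := by
  rw [inv_from_quad hz0 hz]; ring

lemma frob_dichotomy {f : Ω →+* Ω} (hf : ∀ x, f x = x ^ Fintype.card F)
    {a : F} {z : Ω} (hz0 : z ≠ 0) (hz : z * z - (algebraMap F Ω a) * z + 1 = 0) :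
    z ^ (Fintype.card F) = z ∨ z ^ (Fintype.card F) = z⁻¹ := by
  have h1 : (f z) * (f z) - (algebraMap F Ω a) * (f z) + 1 = 0 := by
    have := congrArg f hz
    simp only [_root_.map_add, map_sub, _root_.map_mul, _root_.map_one, _root_.map_zero] at this
    rwa [show f (algebraMap F Ω a) = algebraMap F Ω a by rw [hf]; exact frob_fixed' a] at this
  have h2 : (f z - z) * (f z - (algebraMap F Ω a - z)) = 0 := by
    linear_combination h1 - hz
  rcases mul_eq_zero.1 h2 with h | h
  · left; rw [← hf]; linear_combination h
  · right; rw [← hf, inv_from_quad hz0 hz]; linear_combination h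



section Identities

variable {K : Type*} [Field K]

lemma branch2 {z w A1 A2 A12 : K} (hz : z ≠ 0) (hw : w ≠ 0)
    (h1 : A1 = z + z⁻¹) (h2 : A2 = w + w⁻¹)
    (hΔ : A1 ^ 2 + A2 ^ 2 + A12 ^ 2 - A1 * A2 * A12 - 4 = 0) :
    A12 = z * w + z⁻¹ * w⁻¹ ∨ A12 = z * w⁻¹ + z⁻¹ * w := by
  subst h1 h2
  have hz' : z * z⁻¹ = 1 := mul_inv_cancel₀ hz
  have hw' : w * w⁻¹ = 1 := mul_inv_cancel₀ hw
  have key : (A12 - (z * w + z⁻¹ * w⁻¹)) * (A12 - (z * w⁻¹ + z⁻¹ * w))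
      = (z + z⁻¹) ^ 2 + (w + w⁻¹) ^ 2 + A12 ^ 2 - (z + z⁻¹) * (w + w⁻¹) * A12 - 4 := by
    linear_combination (w⁻¹ ^ 2 + w ^ 2 - 2) * hz' + (z⁻¹ ^ 2 + z ^ 2 - 2) * hw'
  rcases mul_eq_zero.1 (key.trans hΔ) with h | h
  · exact Or.inl (sub_eq_zero.1 h)
  · exact Or.inr (sub_eq_zero.1 h)

lemma fricke_main {z w v A1 A2 A3 A12 A13 A23 A123 : K}
    (hz : z ≠ 0) (hw : w ≠ 0) (hv : v ≠ 0)
    (h1 : A1 = z + z⁻¹) (h2 : A2 = w + w⁻¹) (h3 : A3 = v + v⁻¹)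
    (h12 : A12 = z * w + z⁻¹ * w⁻¹) (h13 : A13 = z * v + z⁻¹ * v⁻¹)
    (h23 : A23 = w * v + w⁻¹ * v⁻¹)
    (hrel : A123 ^ 2 - A123 * (A12 * A3 + A13 * A2 + A23 * A1 - A1 * A2 * A3)
      + (A1 ^ 2 + A2 ^ 2 + A3 ^ 2 + A12 ^ 2 + A13 ^ 2 + A23 ^ 2
        - A1 * A2 * A12 - A1 * A3 * A13 - A2 * A3 * A23 + A12 * A13 * A23 - 4) = 0) :
    A123 = z * w * v + z⁻¹ * w⁻¹ * v⁻¹ := by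
  subst h1 h2 h3 h12 h13 h23
  have hz' : z * z⁻¹ = 1 := mul_inv_cancel₀ hz
  have hw' : w * w⁻¹ = 1 := mul_inv_cancel₀ hw
  have hv' : v * v⁻¹ = 1 := mul_inv_cancel₀ hv
  have key : (A123 - (z * w * v + z⁻¹ * w⁻¹ * v⁻¹)) ^ 2
      = A123 ^ 2 - A123 * ((z * w + z⁻¹ * w⁻¹) * (v + v⁻¹) + (z * v + z⁻¹ * v⁻¹) * (w + w⁻¹)
          + (w * v + w⁻¹ * v⁻¹) * (z + z⁻¹) - (z + z⁻¹) * (w + w⁻¹) * (v + v⁻¹))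
      + ((z + z⁻¹) ^ 2 + (w + w⁻¹) ^ 2 + (v + v⁻¹) ^ 2 + (z * w + z⁻¹ * w⁻¹) ^ 2
          + (z * v + z⁻¹ * v⁻¹) ^ 2 + (w * v + w⁻¹ * v⁻¹) ^ 2
          - (z + z⁻¹) * (w + w⁻¹) * (z * w + z⁻¹ * w⁻¹)
          - (z + z⁻¹) * (v + v⁻¹) * (z * v + z⁻¹ * v⁻¹)
          - (w + w⁻¹) * (v + v⁻¹) * (w * v + w⁻¹ * v⁻¹)
          + (z * w + z⁻¹ * w⁻¹) * (z * v + z⁻¹ * v⁻¹) * (w * v + w⁻¹ * v⁻¹) - 4) := by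
    linear_combination ((-1)*w⁻¹^2*v⁻¹*v + w⁻¹^2 + (-1)*w⁻¹*v⁻¹^2*w + 2*w⁻¹*v⁻¹*w*v
        + (-1)*w⁻¹*w*v^2 + v⁻¹^2 + (-1)*v⁻¹*w^2*v + w^2 + v^2 + (-2)) * hz'
      + ((-1)*z⁻¹^2*v⁻¹*v + z⁻¹^2 + (-1)*v⁻¹*z^2*v + 2*v⁻¹*v + z^2 + (-2)) * hw'
  rw [← key] at hrel
  exact sub_eq_zero.1 (pow_eq_zero_iff (two_ne_zero) |>.1 hrel)

lemma fricke_other {z w v A1 A2 A3 A12 A13 A23 A123 : K}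
    (hz : z ≠ 0) (hw : w ≠ 0) (hv : v ≠ 0)
    (h1 : A1 = z + z⁻¹) (h2 : A2 = w + w⁻¹) (h3 : A3 = v + v⁻¹)
    (h12 : A12 = z * w + z⁻¹ * w⁻¹) (h13 : A13 = z * v + z⁻¹ * v⁻¹)
    (h23 : A23 = w * v⁻¹ + w⁻¹ * v)
    (hrel : A123 ^ 2 - A123 * (A12 * A3 + A13 * A2 + A23 * A1 - A1 * A2 * A3)
      + (A1 ^ 2 + A2 ^ 2 + A3 ^ 2 + A12 ^ 2 + A13 ^ 2 + A23 ^ 2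
        - A1 * A2 * A12 - A1 * A3 * A13 - A2 * A3 * A23 + A12 * A13 * A23 - 4) = 0) :
    A123 = z * w * v + z⁻¹ * w⁻¹ * v⁻¹ - z * ((w - w⁻¹) * (v - v⁻¹))
      ∨ A123 = z * w * v + z⁻¹ * w⁻¹ * v⁻¹ - z⁻¹ * ((w - w⁻¹) * (v - v⁻¹)) := by
  subst h1 h2 h3 h12 h13 h23
  have hz' : z * z⁻¹ = 1 := mul_inv_cancel₀ hz
  have hw' : w * w⁻¹ = 1 := mul_inv_cancel₀ hw
  have hv' : v * v⁻¹ = 1 := mul_inv_cancel₀ hv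
  have key : (A123 - (z * w * v + z⁻¹ * w⁻¹ * v⁻¹ - z * ((w - w⁻¹) * (v - v⁻¹))))
      * (A123 - (z * w * v + z⁻¹ * w⁻¹ * v⁻¹ - z⁻¹ * ((w - w⁻¹) * (v - v⁻¹))))
      = A123 ^ 2 - A123 * ((z * w + z⁻¹ * w⁻¹) * (v + v⁻¹) + (z * v + z⁻¹ * v⁻¹) * (w + w⁻¹)
          + (w * v⁻¹ + w⁻¹ * v) * (z + z⁻¹) - (z + z⁻¹) * (w + w⁻¹) * (v + v⁻¹))
      + ((z + z⁻¹) ^ 2 + (w + w⁻¹) ^ 2 + (v + v⁻¹) ^ 2 + (z * w + z⁻¹ * w⁻¹) ^ 2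
          + (z * v + z⁻¹ * v⁻¹) ^ 2 + (w * v⁻¹ + w⁻¹ * v) ^ 2
          - (z + z⁻¹) * (w + w⁻¹) * (z * w + z⁻¹ * w⁻¹)
          - (z + z⁻¹) * (v + v⁻¹) * (z * v + z⁻¹ * v⁻¹)
          - (w + w⁻¹) * (v + v⁻¹) * (w * v⁻¹ + w⁻¹ * v)
          + (z * w + z⁻¹ * w⁻¹) * (z * v + z⁻¹ * v⁻¹) * (w * v⁻¹ + w⁻¹ * v) - 4) := by
    linear_combination ((-1)*w⁻¹^2*v⁻¹*v + w⁻¹^2 + (-1)*w⁻¹*v⁻¹^2*w + 2*w⁻¹*v⁻¹*w*v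
        + (-1)*w⁻¹*w*v^2 + v⁻¹^2 + (-1)*v⁻¹*w^2*v + w^2 + v^2 + (-2)) * hz'
      + ((-1)*z⁻¹^2*v⁻¹*v + z⁻¹^2 + (-1)*v⁻¹*z^2*v + 2*v⁻¹*v + z^2 + (-2)) * hw'
  rw [← key] at hrel
  rcases mul_eq_zero.1 hrel with h | h
  · exact Or.inl (sub_eq_zero.1 h)
  · exact Or.inr (sub_eq_zero.1 h)

end Identities

lemma norm_prop {f : Ω →+* Ω} (hf : ∀ x, f x = x ^ Fintype.card F)
    {ξ ω : Ω} (hξ0 : ξ ≠ 0) (hω0 : ω ≠ 0)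
    (hξN : ξ ^ Fintype.card F = ξ⁻¹) (hξne : ξ ^ Fintype.card F ≠ ξ)
    (hωD : ω ^ Fintype.card F = ω ∨ ω ^ Fintype.card F = ω⁻¹) {c : F}
    (hbr : algebraMap F Ω c = ω * ξ + ω⁻¹ * ξ⁻¹ ∨ algebraMap F Ω c = ω * ξ⁻¹ + ω⁻¹ * ξ) :
    ω ^ Fintype.card F = ω⁻¹ := by
  rcases hωD with hωq | h
  swap
  · exact h
  have hξξ : ξ ≠ ξ⁻¹ := fun h => hξne (by rw [hξN, ← h])
  suffices hs : ω = ω⁻¹ by rw [hωq]; exact hs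
  have hfix : f (algebraMap F Ω c) = algebraMap F Ω c := by rw [hf]; exact frob_fixed' c
  rcases hbr with hb | hb
  · have h2 := congrArg f hb
    rw [hfix, _root_.map_add, _root_.map_mul, _root_.map_mul, map_inv₀, map_inv₀,
      hf, hf, hωq, hξN, inv_inv] at h2
    have h4 : ω * ξ + ω⁻¹ * ξ⁻¹ = ω * ξ⁻¹ + (ω)⁻¹ * ξ := by
      rw [hb.symm.trans h2]
    have h3 : (ω - ω⁻¹) * (ξ - ξ⁻¹) = 0 := by linear_combination h4
    rcases mul_eq_zero.1 h3 with h | h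
    · exact sub_eq_zero.1 h
    · exact absurd (sub_eq_zero.1 h) hξξ
  · have h2 := congrArg f hb
    rw [hfix, _root_.map_add, _root_.map_mul, _root_.map_mul, map_inv₀, map_inv₀,
      hf, hf, hωq, hξN, inv_inv] at h2
    have h4 : ω * ξ⁻¹ + ω⁻¹ * ξ = ω * ξ + ω⁻¹ * ξ⁻¹ := hb.symm.trans h2
    have h3 : (ω - ω⁻¹) * (ξ - ξ⁻¹) = 0 := by linear_combination -h4
    rcases mul_eq_zero.1 h3 with h | h
    · exact sub_eq_zero.1 h
    · exact absurd (sub_eq_zero.1 h) hξξ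

/-- the goal format of the main theorem -/
def Concl (a₁ a₂ a₃ a₁₂ a₁₃ a₂₃ a₁₂₃ : F) : Prop :=
  ∃ x y u : Matrix.SpecialLinearGroup (Fin 2) F,
    Matrix.trace (x : Matrix (Fin 2) (Fin 2) F) = a₁ ∧
    Matrix.trace (y : Matrix (Fin 2) (Fin 2) F) = a₂ ∧
    Matrix.trace (u : Matrix (Fin 2) (Fin 2) F) = a₃ ∧
    Matrix.trace ((x * y : Matrix.SpecialLinearGroup (Fin 2) F) : Matrix (Fin 2) (Fin 2) F) = a₁₂ ∧
    Matrix.trace ((x * u : Matrix.SpecialLinearGroup (Fin 2) F) : Matrix (Fin 2) (Fin 2) F) = a₁₃ ∧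
    Matrix.trace ((y * u : Matrix.SpecialLinearGroup (Fin 2) F) : Matrix (Fin 2) (Fin 2) F) = a₂₃ ∧
    Matrix.trace ((x * y * u : Matrix.SpecialLinearGroup (Fin 2) F) : Matrix (Fin 2) (Fin 2) F) = a₁₂₃

lemma diag_det {z : F} (hz : z ≠ 0) : z * z⁻¹ - 0 * 0 = 1 := by
  rw [mul_inv_cancel₀ hz]; ring

/-- C1, combo A : all main branch, three diagonal matrices -/
lemma splitA {z w v a₁ a₂ a₃ a₁₂ a₁₃ a₂₃ a₁₂₃ : F}
    (hz : z ≠ 0) (hw : w ≠ 0) (hv : v ≠ 0)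
    (h1 : a₁ = z + z⁻¹) (h2 : a₂ = w + w⁻¹) (h3 : a₃ = v + v⁻¹)
    (h12 : a₁₂ = z * w + z⁻¹ * w⁻¹) (h13 : a₁₃ = z * v + z⁻¹ * v⁻¹)
    (h23 : a₂₃ = w * v + w⁻¹ * v⁻¹) (h123 : a₁₂₃ = z * w * v + z⁻¹ * w⁻¹ * v⁻¹) :
    Concl a₁ a₂ a₃ a₁₂ a₁₃ a₂₃ a₁₂₃ := by
  have hzw : (z * w)⁻¹ = z⁻¹ * w⁻¹ := mul_inv z w
  refine ⟨sl2 z 0 0 z⁻¹ (diag_det hz), sl2 w 0 0 w⁻¹ (diag_det hw),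
    sl2 v 0 0 v⁻¹ (diag_det hv), ?_, ?_, ?_, ?_, ?_, ?_, ?_⟩ <;>
    simp only [Matrix.SpecialLinearGroup.coe_mul, sl2_coe, Matrix.mul_fin_two,
      Matrix.trace_fin_two_of, trace_mul2]
  · rw [h1]
  · rw [h2]
  · rw [h3]
  · rw [h12]; ring
  · rw [h13]; ring
  · rw [h23]; ring
  · rw [h123, ← mul_inv, ← mul_inv]; ring

/-- C1, combo B -/
lemma splitB {z w v a₁ a₂ a₃ a₁₂ a₁₃ a₂₃ a₁₂₃ : F}
    (hz : z ≠ 0) (hw : w ≠ 0) (hv : v ≠ 0)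
    (h1 : a₁ = z + z⁻¹) (h2 : a₂ = w + w⁻¹) (h3 : a₃ = v + v⁻¹)
    (h12 : a₁₂ = z * w + z⁻¹ * w⁻¹) (h13 : a₁₃ = z * v + z⁻¹ * v⁻¹)
    (h23 : a₂₃ = w * v⁻¹ + w⁻¹ * v)
    (h123 : a₁₂₃ = z * w * v + z⁻¹ * w⁻¹ * v⁻¹ - z * ((w - w⁻¹) * (v - v⁻¹))) :
    Concl a₁ a₂ a₃ a₁₂ a₁₃ a₂₃ a₁₂₃ := by
  refine ⟨sl2 z 0 0 z⁻¹ (diag_det hz),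
    sl2 w 1 0 w⁻¹ (by rw [mul_inv_cancel₀ hw]; ring),
    sl2 v 0 (-((w - w⁻¹) * (v - v⁻¹))) v⁻¹ (by rw [mul_inv_cancel₀ hv]; ring),
    ?_, ?_, ?_, ?_, ?_, ?_, ?_⟩ <;>
    simp only [Matrix.SpecialLinearGroup.coe_mul, sl2_coe, Matrix.mul_fin_two,
      Matrix.trace_fin_two_of, trace_mul2]
  · rw [h1]
  · rw [h2]
  · rw [h3]
  · rw [h12]; ring
  · rw [h13]; ring
  · rw [h23]; ring
  · rw [h123]; ring

/-- C1, combo C -/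
lemma splitC {z w v a₁ a₂ a₃ a₁₂ a₁₃ a₂₃ a₁₂₃ : F}
    (hz : z ≠ 0) (hw : w ≠ 0) (hv : v ≠ 0)
    (h1 : a₁ = z + z⁻¹) (h2 : a₂ = w + w⁻¹) (h3 : a₃ = v + v⁻¹)
    (h12 : a₁₂ = z * w + z⁻¹ * w⁻¹) (h13 : a₁₃ = z * v + z⁻¹ * v⁻¹)
    (h23 : a₂₃ = w * v⁻¹ + w⁻¹ * v)
    (h123 : a₁₂₃ = z * w * v + z⁻¹ * w⁻¹ * v⁻¹ - z⁻¹ * ((w - w⁻¹) * (v - v⁻¹))) :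
    Concl a₁ a₂ a₃ a₁₂ a₁₃ a₂₃ a₁₂₃ := by
  refine ⟨sl2 z 0 0 z⁻¹ (diag_det hz),
    sl2 w 0 1 w⁻¹ (by rw [mul_inv_cancel₀ hw]; ring),
    sl2 v (-((w - w⁻¹) * (v - v⁻¹))) 0 v⁻¹ (by rw [mul_inv_cancel₀ hv]; ring),
    ?_, ?_, ?_, ?_, ?_, ?_, ?_⟩ <;>
    simp only [Matrix.SpecialLinearGroup.coe_mul, sl2_coe, Matrix.mul_fin_two,
      Matrix.trace_fin_two_of, trace_mul2]
  · rw [h1]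
  · rw [h2]
  · rw [h3]
  · rw [h12]; ring
  · rw [h13]; ring
  · rw [h23]; ring
  · rw [h123]; ring

/-- scalar case : x = ε·1 -/
lemma epsCase {ε a₁ a₂ a₃ a₁₂ a₁₃ a₂₃ a₁₂₃ : F}
    (hε : ε * ε = 1) (h1 : a₁ = ε + ε) (h12 : a₁₂ = ε * a₂) (h13 : a₁₃ = ε * a₃)
    (h123 : a₁₂₃ = ε * a₂₃) :
    Concl a₁ a₂ a₃ a₁₂ a₁₃ a₂₃ a₁₂₃ := by
  obtain ⟨y, u, hy, hu, hyu⟩ := pair_exists a₂ a₃ a₂₃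
  have hyu2 := hyu
  rw [Matrix.SpecialLinearGroup.coe_mul] at hyu2
  have hsc : ∀ Y : Matrix (Fin 2) (Fin 2) F,
      Matrix.trace ((!![ε, 0; 0, ε] : Matrix (Fin 2) (Fin 2) F) * Y) = ε * Matrix.trace Y := by
    intro Y
    have hid : (!![ε, 0; 0, ε] : Matrix (Fin 2) (Fin 2) F) = ε • (1 : Matrix (Fin 2) (Fin 2) F) := by
      ext i j
      fin_cases i <;> fin_cases j <;> simp [Matrix.one_apply]
    rw [hid, smul_mul_assoc, one_mul, Matrix.trace_smul, smul_eq_mul]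
  refine ⟨sl2 ε 0 0 ε (by linear_combination hε), y, u, ?_, hy, hu, ?_, ?_, hyu, ?_⟩
  · rw [sl2_coe, Matrix.trace_fin_two_of, h1]
  · rw [Matrix.SpecialLinearGroup.coe_mul, sl2_coe, hsc, hy, h12]
  · rw [Matrix.SpecialLinearGroup.coe_mul, sl2_coe, hsc, hu, h13]
  · rw [Matrix.SpecialLinearGroup.coe_mul, Matrix.SpecialLinearGroup.coe_mul, sl2_coe,
      mul_assoc, hsc, hyu2, h123]

/-- the nonsplit torus construction -/
lemma C2build {f : (AlgebraicClosure F) →+* (AlgebraicClosure F)}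
    (hf : ∀ x, f x = x ^ Fintype.card F)
    {ξ : Ω} {c₀ : F} (hξ0 : ξ ≠ 0) (hc₀ : algebraMap F Ω c₀ = ξ + ξ⁻¹)
    (hξN : ξ ^ Fintype.card F = ξ⁻¹) (hξne : ξ ^ Fintype.card F ≠ ξ)
    {z w v : Ω} (hz0 : z ≠ 0) (hw0 : w ≠ 0) (hv0 : v ≠ 0)
    (hNz : z ^ Fintype.card F = z⁻¹) (hNw : w ^ Fintype.card F = w⁻¹)
    (hNv : v ^ Fintype.card F = v⁻¹)
    {a₁ a₂ a₃ a₁₂ a₁₃ a₂₃ a₁₂₃ : F}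
    (h1 : algebraMap F Ω a₁ = z + z⁻¹) (h2 : algebraMap F Ω a₂ = w + w⁻¹)
    (h3 : algebraMap F Ω a₃ = v + v⁻¹)
    (h12 : algebraMap F Ω a₁₂ = z * w + (z * w)⁻¹)
    (h13 : algebraMap F Ω a₁₃ = z * v + (z * v)⁻¹)
    (h23 : algebraMap F Ω a₂₃ = w * v + (w * v)⁻¹)
    (h123 : algebraMap F Ω a₁₂₃ = z * w * v + (z * w * v)⁻¹) :
    Concl a₁ a₂ a₃ a₁₂ a₁₃ a₂₃ a₁₂₃ := by
  have inj : Function.Injective (algebraMap F Ω) := (algebraMap F Ω).injective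
  have hξξ : ξ - ξ⁻¹ ≠ 0 := sub_ne_zero.2 (fun h => hξne (by rw [hξN, ← h]))
  have hξq2 : ξ * ξ = (algebraMap F Ω c₀) * ξ - 1 := by
    rw [hc₀]
    linear_combination (-1 : Ω) * (inv_mul_cancel₀ hξ0)
  -- coordinates with respect to the basis 1, ξ
  have coords : ∀ ω : Ω, ω ^ Fintype.card F = ω⁻¹ →
      ∃ s t : F, ω = algebraMap F Ω s + algebraMap F Ω t * ξ := by
    intro ω hωN
    have hT : f ((ω - ω⁻¹) / (ξ - ξ⁻¹)) = (ω - ω⁻¹) / (ξ - ξ⁻¹) := by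
      rw [map_div₀, map_sub, map_sub, map_inv₀, map_inv₀, hf, hf, hωN, hξN, inv_inv, inv_inv,
        show ω⁻¹ - ω = -(ω - ω⁻¹) by ring, show ξ⁻¹ - ξ = -(ξ - ξ⁻¹) by ring, neg_div_neg_eq]
    obtain ⟨t, ht⟩ := mem_range_of_pow_card _ (by rw [← hf]; exact hT)
    have htm : algebraMap F Ω t * (ξ - ξ⁻¹) = ω - ω⁻¹ := by
      rw [ht]; exact div_mul_cancel₀ _ hξξ
    have hS : f (ω - algebraMap F Ω t * ξ) = ω - algebraMap F Ω t * ξ := by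
      rw [map_sub, _root_.map_mul,
        show f (algebraMap F Ω t) = algebraMap F Ω t by rw [hf]; exact frob_fixed' t,
        hf, hf, hωN, hξN]
      linear_combination htm
    obtain ⟨s, hs⟩ := mem_range_of_pow_card _ (by rw [← hf]; exact hS)
    exact ⟨s, t, by rw [hs]; ring⟩
  -- conjugate representation
  have conj : ∀ (ω : Ω) (s t : F), ω = algebraMap F Ω s + algebraMap F Ω t * ξ →
      ω ^ Fintype.card F = ω⁻¹ → ω⁻¹ = algebraMap F Ω s + algebraMap F Ω t * ξ⁻¹ := by
    intro ω s t hrep hN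
    have h := congrArg f hrep
    rw [hf, hN, _root_.map_add, _root_.map_mul,
      show f (algebraMap F Ω s) = algebraMap F Ω s by rw [hf]; exact frob_fixed' s,
      show f (algebraMap F Ω t) = algebraMap F Ω t by rw [hf]; exact frob_fixed' t,
      hf, hξN] at h
    exact h
  -- trace identification
  have traceEq : ∀ (s t d : F) (ω : Ω), ω = algebraMap F Ω s + algebraMap F Ω t * ξ →
      ω ^ Fintype.card F = ω⁻¹ → algebraMap F Ω d = ω + ω⁻¹ → s + (s + t * c₀) = d := by
    intro s t d ω hrep hN hd
    apply inj
    have hconj := conj ω s t hrep hN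
    rw [_root_.map_add, _root_.map_add, _root_.map_mul, hd, hconj, hrep, hc₀]
    ring
  -- determinant identification
  have detEq : ∀ (s t : F) (ω : Ω), ω ≠ 0 → ω = algebraMap F Ω s + algebraMap F Ω t * ξ →
      ω ^ Fintype.card F = ω⁻¹ → s * (s + t * c₀) - (-t) * t = 1 := by
    intro s t ω hω0 hrep hN
    apply inj
    have hconj := conj ω s t hrep hN
    have e1 : ω * ω⁻¹ = 1 := mul_inv_cancel₀ hω0
    simp only [map_sub, _root_.map_add, _root_.map_mul, map_neg, _root_.map_one]
    rw [← e1, hconj, hrep]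
    linear_combination (algebraMap F Ω s * algebraMap F Ω t) * hc₀
      - (algebraMap F Ω t * algebraMap F Ω t) * (mul_inv_cancel₀ hξ0)
  -- multiplication of representations
  have repmul : ∀ (s t s' t' : F) (ω ω' : Ω),
      ω = algebraMap F Ω s + algebraMap F Ω t * ξ →
      ω' = algebraMap F Ω s' + algebraMap F Ω t' * ξ →
      ω * ω' = algebraMap F Ω (s * s' - t * t')
        + algebraMap F Ω (s * t' + t * s' + t * t' * c₀) * ξ := by
    intro s t s' t' ω ω' hω hω'
    rw [hω, hω']
    simp only [map_sub, _root_.map_add, _root_.map_mul]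
    linear_combination (algebraMap F Ω t * algebraMap F Ω t') * hξq2
  -- generic product-trace lemma
  have traceMul : ∀ (s t s' t' d : F) (ω ω' : Ω),
      ω = algebraMap F Ω s + algebraMap F Ω t * ξ →
      ω' = algebraMap F Ω s' + algebraMap F Ω t' * ξ →
      ω ^ Fintype.card F = ω⁻¹ → ω' ^ Fintype.card F = ω'⁻¹ →
      algebraMap F Ω d = ω * ω' + (ω * ω')⁻¹ →
      s * s' + (-t) * t' + t * (-t') + (s + t * c₀) * (s' + t' * c₀) = d := by
    intro s t s' t' d ω ω' hω hω' hN hN' hd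
    have hr := repmul s t s' t' ω ω' hω hω'
    have hNN : (ω * ω') ^ Fintype.card F = (ω * ω')⁻¹ := by
      rw [mul_pow, hN, hN', mul_inv]
    have := traceEq (s * s' - t * t') (s * t' + t * s' + t * t' * c₀) d (ω * ω') hr hNN hd
    linear_combination this
  -- coordinates of z, w, v
  obtain ⟨s₁, t₁, hr₁⟩ := coords z hNz
  obtain ⟨s₂, t₂, hr₂⟩ := coords w hNw
  obtain ⟨s₃, t₃, hr₃⟩ := coords v hNv
  -- matrix product representation facts
  have hrzw := repmul s₁ t₁ s₂ t₂ z w hr₁ hr₂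
  have hNzw : (z * w) ^ Fintype.card F = (z * w)⁻¹ := by rw [mul_pow, hNz, hNw, mul_inv]
  -- the three matrices
  refine ⟨sl2 s₁ (-t₁) t₁ (s₁ + t₁ * c₀) (detEq s₁ t₁ z hz0 hr₁ hNz),
    sl2 s₂ (-t₂) t₂ (s₂ + t₂ * c₀) (detEq s₂ t₂ w hw0 hr₂ hNw),
    sl2 s₃ (-t₃) t₃ (s₃ + t₃ * c₀) (detEq s₃ t₃ v hv0 hr₃ hNv), ?_, ?_, ?_, ?_, ?_, ?_, ?_⟩
  · rw [sl2_coe, Matrix.trace_fin_two_of]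
    exact traceEq s₁ t₁ a₁ z hr₁ hNz h1
  · rw [sl2_coe, Matrix.trace_fin_two_of]
    exact traceEq s₂ t₂ a₂ w hr₂ hNw h2
  · rw [sl2_coe, Matrix.trace_fin_two_of]
    exact traceEq s₃ t₃ a₃ v hr₃ hNv h3
  · rw [Matrix.SpecialLinearGroup.coe_mul, sl2_coe, sl2_coe, trace_mul2]
    exact traceMul s₁ t₁ s₂ t₂ a₁₂ z w hr₁ hr₂ hNz hNw h12
  · rw [Matrix.SpecialLinearGroup.coe_mul, sl2_coe, sl2_coe, trace_mul2]
    exact traceMul s₁ t₁ s₃ t₃ a₁₃ z v hr₁ hr₃ hNz hNv h13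
  · rw [Matrix.SpecialLinearGroup.coe_mul, sl2_coe, sl2_coe, trace_mul2]
    exact traceMul s₂ t₂ s₃ t₃ a₂₃ w v hr₂ hr₃ hNw hNv h23
  · rw [Matrix.SpecialLinearGroup.coe_mul, Matrix.SpecialLinearGroup.coe_mul,
      sl2_coe, sl2_coe, sl2_coe]
    have hmm : (!![s₁, -t₁; t₁, s₁ + t₁ * c₀] : Matrix (Fin 2) (Fin 2) F)
        * !![s₂, -t₂; t₂, s₂ + t₂ * c₀]
        = !![s₁ * s₂ - t₁ * t₂, -(s₁ * t₂ + t₁ * s₂ + t₁ * t₂ * c₀);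
            s₁ * t₂ + t₁ * s₂ + t₁ * t₂ * c₀,
            (s₁ * s₂ - t₁ * t₂) + (s₁ * t₂ + t₁ * s₂ + t₁ * t₂ * c₀) * c₀] := by
      rw [Matrix.mul_fin_two]
      congr 1 <;> ring
    rw [hmm, trace_mul2]
    exact traceMul (s₁ * s₂ - t₁ * t₂) (s₁ * t₂ + t₁ * s₂ + t₁ * t₂ * c₀) s₃ t₃ a₁₂₃
      (z * w) v hrzw hr₃ hNzw hNv (by rw [h123])

/-- The fully degenerate case: all three pair discriminants vanish. -/
lemma caseC (a₁ a₂ a₃ a₁₂ a₁₃ a₂₃ a₁₂₃ : F)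
    (hrel : a₁₂₃ ^ 2 - a₁₂₃ * (a₁₂ * a₃ + a₁₃ * a₂ + a₂₃ * a₁ - a₁ * a₂ * a₃)
      + (a₁ ^ 2 + a₂ ^ 2 + a₃ ^ 2 + a₁₂ ^ 2 + a₁₃ ^ 2 + a₂₃ ^ 2
        - a₁ * a₂ * a₁₂ - a₁ * a₃ * a₁₃ - a₂ * a₃ * a₂₃ + a₁₂ * a₁₃ * a₂₃ - 4) = 0)
    (hd12 : a₁ ^ 2 + a₂ ^ 2 + a₁₂ ^ 2 - a₁ * a₂ * a₁₂ - 4 = 0)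
    (hd13 : a₁ ^ 2 + a₃ ^ 2 + a₁₃ ^ 2 - a₁ * a₃ * a₁₃ - 4 = 0)
    (hd23 : a₂ ^ 2 + a₃ ^ 2 + a₂₃ ^ 2 - a₂ * a₃ * a₂₃ - 4 = 0) :
    Concl a₁ a₂ a₃ a₁₂ a₁₃ a₂₃ a₁₂₃ := by
  classical
  have inj : Function.Injective (algebraMap F Ω) := (algebraMap F Ω).injective
  obtain ⟨f, hf⟩ := frob_hom (F := F)
  -- push the hypotheses to Ω
  have Hrel : (algebraMap F Ω a₁₂₃) ^ 2 - (algebraMap F Ω a₁₂₃) * ((algebraMap F Ω a₁₂) * (algebraMap F Ω a₃) + (algebraMap F Ω a₁₃) * (algebraMap F Ω a₂) + (algebraMap F Ω a₂₃) * (algebraMap F Ω a₁) - (algebraMap F Ω a₁) * (algebraMap F Ω a₂) * (algebraMap F Ω a₃))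
      + ((algebraMap F Ω a₁) ^ 2 + (algebraMap F Ω a₂) ^ 2 + (algebraMap F Ω a₃) ^ 2 + (algebraMap F Ω a₁₂) ^ 2 + (algebraMap F Ω a₁₃) ^ 2 + (algebraMap F Ω a₂₃) ^ 2
        - (algebraMap F Ω a₁) * (algebraMap F Ω a₂) * (algebraMap F Ω a₁₂) - (algebraMap F Ω a₁) * (algebraMap F Ω a₃) * (algebraMap F Ω a₁₃) - (algebraMap F Ω a₂) * (algebraMap F Ω a₃) * (algebraMap F Ω a₂₃) + (algebraMap F Ω a₁₂) * (algebraMap F Ω a₁₃) * (algebraMap F Ω a₂₃) - 4) = 0 := by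
    have h := congrArg (algebraMap F Ω) hrel
    simpa only [map_add, map_sub, _root_.map_mul, map_pow, map_ofNat, map_zero] using h
  have H12 : (algebraMap F Ω a₁) ^ 2 + (algebraMap F Ω a₂) ^ 2 + (algebraMap F Ω a₁₂) ^ 2
      - (algebraMap F Ω a₁) * (algebraMap F Ω a₂) * (algebraMap F Ω a₁₂) - 4 = 0 := by
    have h := congrArg (algebraMap F Ω) hd12
    simpa only [map_add, map_sub, _root_.map_mul, map_pow, map_ofNat, map_zero] using h
  have H13 : (algebraMap F Ω a₁) ^ 2 + (algebraMap F Ω a₃) ^ 2 + (algebraMap F Ω a₁₃) ^ 2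
      - (algebraMap F Ω a₁) * (algebraMap F Ω a₃) * (algebraMap F Ω a₁₃) - 4 = 0 := by
    have h := congrArg (algebraMap F Ω) hd13
    simpa only [map_add, map_sub, _root_.map_mul, map_pow, map_ofNat, map_zero] using h
  have H23 : (algebraMap F Ω a₂) ^ 2 + (algebraMap F Ω a₃) ^ 2 + (algebraMap F Ω a₂₃) ^ 2
      - (algebraMap F Ω a₂) * (algebraMap F Ω a₃) * (algebraMap F Ω a₂₃) - 4 = 0 := by
    have h := congrArg (algebraMap F Ω) hd23
    simpa only [map_add, map_sub, _root_.map_mul, map_pow, map_ofNat, map_zero] using h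
  -- roots
  obtain ⟨z, hz0, hzq⟩ := quad_root (F := F) a₁
  have ha1 : algebraMap F Ω a₁ = z + z⁻¹ := (sum_inv_from_quad hz0 hzq).symm
  have hzD := frob_dichotomy hf hz0 hzq
  -- w, flipped to match a₁₂
  obtain ⟨w, hw0, ha2, ha12, hwD⟩ :
      ∃ w : Ω, w ≠ 0 ∧ algebraMap F Ω a₂ = w + w⁻¹ ∧
        algebraMap F Ω a₁₂ = z * w + z⁻¹ * w⁻¹ ∧
        (w ^ Fintype.card F = w ∨ w ^ Fintype.card F = w⁻¹) := by
    obtain ⟨w₀, hw₀0, hwq₀⟩ := quad_root (F := F) a₂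
    have ha2₀ : algebraMap F Ω a₂ = w₀ + w₀⁻¹ := (sum_inv_from_quad hw₀0 hwq₀).symm
    rcases branch2 hz0 hw₀0 ha1 ha2₀ H12 with hbr | hbr
    · exact ⟨w₀, hw₀0, ha2₀, hbr, frob_dichotomy hf hw₀0 hwq₀⟩
    · refine ⟨w₀⁻¹, inv_ne_zero hw₀0, by rw [ha2₀, inv_inv, add_comm],
        by rw [hbr, inv_inv], ?_⟩
      rcases frob_dichotomy hf hw₀0 hwq₀ with h | h
      · exact Or.inl (by rw [inv_pow, h])
      · exact Or.inr (by rw [inv_pow, h])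
  -- v, flipped to match a₁₃
  obtain ⟨v, hv0, ha3, ha13, hvD⟩ :
      ∃ v : Ω, v ≠ 0 ∧ algebraMap F Ω a₃ = v + v⁻¹ ∧
        algebraMap F Ω a₁₃ = z * v + z⁻¹ * v⁻¹ ∧
        (v ^ Fintype.card F = v ∨ v ^ Fintype.card F = v⁻¹) := by
    obtain ⟨v₀, hv₀0, hvq₀⟩ := quad_root (F := F) a₃
    have ha3₀ : algebraMap F Ω a₃ = v₀ + v₀⁻¹ := (sum_inv_from_quad hv₀0 hvq₀).symm
    rcases branch2 hz0 hv₀0 ha1 ha3₀ H13 with hbr | hbr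
    · exact ⟨v₀, hv₀0, ha3₀, hbr, frob_dichotomy hf hv₀0 hvq₀⟩
    · refine ⟨v₀⁻¹, inv_ne_zero hv₀0, by rw [ha3₀, inv_inv, add_comm],
        by rw [hbr, inv_inv], ?_⟩
      rcases frob_dichotomy hf hv₀0 hvq₀ with h | h
      · exact Or.inl (by rw [inv_pow, h])
      · exact Or.inr (by rw [inv_pow, h])
  -- a₂₃ branch
  have hS := branch2 hw0 hv0 ha2 ha3 H23
  by_cases hsplit : z ^ Fintype.card F = z ∧ w ^ Fintype.card F = w ∧ v ^ Fintype.card F = v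
  · -- split case : everything comes from F
    obtain ⟨hzs, hws, hvs⟩ := hsplit
    obtain ⟨z₀, hz₀⟩ := mem_range_of_pow_card z hzs
    obtain ⟨w₁, hw₁⟩ := mem_range_of_pow_card w hws
    obtain ⟨v₁, hv₁⟩ := mem_range_of_pow_card v hvs
    have hz₀0 : z₀ ≠ 0 := fun h => hz0 (by rw [← hz₀, h, map_zero])
    have hw₁0 : w₁ ≠ 0 := fun h => hw0 (by rw [← hw₁, h, map_zero])
    have hv₁0 : v₁ ≠ 0 := fun h => hv0 (by rw [← hv₁, h, map_zero])
    have e1 : a₁ = z₀ + z₀⁻¹ := by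
      apply inj; rw [ha1, map_add, map_inv₀, hz₀]
    have e2 : a₂ = w₁ + w₁⁻¹ := by
      apply inj; rw [ha2, map_add, map_inv₀, hw₁]
    have e3 : a₃ = v₁ + v₁⁻¹ := by
      apply inj; rw [ha3, map_add, map_inv₀, hv₁]
    have e12 : a₁₂ = z₀ * w₁ + z₀⁻¹ * w₁⁻¹ := by
      apply inj
      rw [ha12, map_add, _root_.map_mul, _root_.map_mul, map_inv₀, map_inv₀, hz₀, hw₁]
    have e13 : a₁₃ = z₀ * v₁ + z₀⁻¹ * v₁⁻¹ := by
      apply inj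
      rw [ha13, map_add, _root_.map_mul, _root_.map_mul, map_inv₀, map_inv₀, hz₀, hv₁]
    rcases hS with h23b | h23b
    · have h123 := fricke_main hz0 hw0 hv0 ha1 ha2 ha3 ha12 ha13 h23b Hrel
      have e23 : a₂₃ = w₁ * v₁ + w₁⁻¹ * v₁⁻¹ := by
        apply inj
        rw [h23b, map_add, _root_.map_mul, _root_.map_mul, map_inv₀, map_inv₀, hw₁, hv₁]
      have e123 : a₁₂₃ = z₀ * w₁ * v₁ + z₀⁻¹ * w₁⁻¹ * v₁⁻¹ := by
        apply inj
        rw [h123, map_add, _root_.map_mul, _root_.map_mul, _root_.map_mul, _root_.map_mul,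
          map_inv₀, map_inv₀, map_inv₀, hz₀, hw₁, hv₁]
      exact splitA hz₀0 hw₁0 hv₁0 e1 e2 e3 e12 e13 e23 e123
    · have e23 : a₂₃ = w₁ * v₁⁻¹ + w₁⁻¹ * v₁ := by
        apply inj
        rw [h23b, map_add, _root_.map_mul, _root_.map_mul, map_inv₀, map_inv₀, hw₁, hv₁]
      rcases fricke_other hz0 hw0 hv0 ha1 ha2 ha3 ha12 ha13 h23b Hrel with h123 | h123
      · have e123 : a₁₂₃ = z₀ * w₁ * v₁ + z₀⁻¹ * w₁⁻¹ * v₁⁻¹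
            - z₀ * ((w₁ - w₁⁻¹) * (v₁ - v₁⁻¹)) := by
          apply inj
          rw [h123]
          simp only [map_add, map_sub, _root_.map_mul, map_inv₀, hz₀, hw₁, hv₁]
        exact splitB hz₀0 hw₁0 hv₁0 e1 e2 e3 e12 e13 e23 e123
      · have e123 : a₁₂₃ = z₀ * w₁ * v₁ + z₀⁻¹ * w₁⁻¹ * v₁⁻¹
            - z₀⁻¹ * ((w₁ - w₁⁻¹) * (v₁ - v₁⁻¹)) := by
          apply inj
          rw [h123]
          simp only [map_add, map_sub, _root_.map_mul, map_inv₀, hz₀, hw₁, hv₁]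
        exact splitC hz₀0 hw₁0 hv₁0 e1 e2 e3 e12 e13 e23 e123
  · -- nonsplit case
    have hNall : (z ^ Fintype.card F = z⁻¹ ∧ w ^ Fintype.card F = w⁻¹ ∧
        v ^ Fintype.card F = v⁻¹) ∧
        ∃ ξ : Ω, ∃ c₀ : F, algebraMap F Ω c₀ = ξ + ξ⁻¹ ∧ ξ ≠ 0 ∧
          ξ ^ Fintype.card F = ξ⁻¹ ∧ ξ ^ Fintype.card F ≠ ξ := by
      have hD : ¬ z ^ Fintype.card F = z ∨ ¬ w ^ Fintype.card F = w ∨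
          ¬ v ^ Fintype.card F = v := by tauto
      rcases hD with h | h | h
      · have hNz := Or.resolve_left hzD h
        have hNw := norm_prop hf hz0 hw0 hNz h hwD (Or.inl (by rw [ha12]; ring))
        have hNv := norm_prop hf hz0 hv0 hNz h hvD (Or.inl (by rw [ha13]; ring))
        exact ⟨⟨hNz, hNw, hNv⟩, z, a₁, ha1, hz0, hNz, h⟩
      · have hNw := Or.resolve_left hwD h
        have hNz := norm_prop hf hw0 hz0 hNw h hzD (Or.inl ha12)
        have hNv := norm_prop hf hw0 hv0 hNw h hvD (by
          rcases hS with h' | h'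
          · exact Or.inl (by rw [h']; ring)
          · exact Or.inr (by rw [h']; ring))
        exact ⟨⟨hNz, hNw, hNv⟩, w, a₂, ha2, hw0, hNw, h⟩
      · have hNv := Or.resolve_left hvD h
        have hNz := norm_prop hf hv0 hz0 hNv h hzD (Or.inl ha13)
        have hNw := norm_prop hf hv0 hw0 hNv h hwD (by
          rcases hS with h' | h'
          · exact Or.inl h'
          · exact Or.inr h')
        exact ⟨⟨hNz, hNw, hNv⟩, v, a₃, ha3, hv0, hNv, h⟩
    obtain ⟨⟨hNz, hNw, hNv⟩, ξ, c₀, hc₀, hξ0, hξN, hξne⟩ := hNall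
    have mainCase : algebraMap F Ω a₂₃ = w * v + w⁻¹ * v⁻¹ →
        Concl a₁ a₂ a₃ a₁₂ a₁₃ a₂₃ a₁₂₃ := by
      intro h23b
      have h123 := fricke_main hz0 hw0 hv0 ha1 ha2 ha3 ha12 ha13 h23b Hrel
      refine C2build hf hξ0 hc₀ hξN hξne hz0 hw0 hv0 hNz hNw hNv ha1 ha2 ha3
        (by rw [mul_inv]; exact ha12) (by rw [mul_inv]; exact ha13)
        (by rw [mul_inv]; exact h23b) (by rw [mul_inv, mul_inv]; exact h123)
    rcases hS with h23b | h23b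
    · exact mainCase h23b
    · by_cases hSS : w * v + w⁻¹ * v⁻¹ = w * v⁻¹ + w⁻¹ * v
      · exact mainCase (by rw [h23b, ← hSS])
      · -- genuinely opposite branch: z must be ±1
        have hδ : (w - w⁻¹) * (v - v⁻¹) ≠ 0 := fun h => hSS (by linear_combination h)
        have hfz : f z = z⁻¹ := by rw [hf]; exact hNz
        have hfw : f w = w⁻¹ := by rw [hf]; exact hNw
        have hfv : f v = v⁻¹ := by rw [hf]; exact hNv
        have hzinv : z⁻¹ = z := by
          rcases fricke_other hz0 hw0 hv0 ha1 ha2 ha3 ha12 ha13 h23b Hrel with h123 | h123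
          · have hfeq := congrArg f h123
            rw [show f (algebraMap F Ω a₁₂₃) = algebraMap F Ω a₁₂₃ by
              rw [hf]; exact frob_fixed' _] at hfeq
            simp only [map_sub, _root_.map_add, _root_.map_mul, map_inv₀,
              hfz, hfw, hfv, inv_inv] at hfeq
            have hTT := h123.symm.trans hfeq
            have hzz : (z - z⁻¹) * ((w - w⁻¹) * (v - v⁻¹)) = 0 := by linear_combination -hTT
            rcases mul_eq_zero.1 hzz with h' | h'
            · exact (sub_eq_zero.1 h').symm
            · exact absurd h' hδ
          · have hfeq := congrArg f h123
            rw [show f (algebraMap F Ω a₁₂₃) = algebraMap F Ω a₁₂₃ by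
              rw [hf]; exact frob_fixed' _] at hfeq
            simp only [map_sub, _root_.map_add, _root_.map_mul, map_inv₀,
              hfz, hfw, hfv, inv_inv] at hfeq
            have hTT := h123.symm.trans hfeq
            have hzz : (z - z⁻¹) * ((w - w⁻¹) * (v - v⁻¹)) = 0 := by linear_combination hTT
            rcases mul_eq_zero.1 hzz with h' | h'
            · exact (sub_eq_zero.1 h').symm
            · exact absurd h' hδ
        have hz1 : z * z = 1 := by nth_rewrite 2 [← hzinv]; exact mul_inv_cancel₀ hz0
        obtain ⟨ε, hφε, hε⟩ : ∃ ε : F, algebraMap F Ω ε = z ∧ ε * ε = 1 := by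
          rcases mul_self_eq_one_iff.1 hz1 with h' | h'
          · exact ⟨1, by rw [_root_.map_one, h'], one_mul 1⟩
          · exact ⟨-1, by rw [map_neg, _root_.map_one, h'], by ring⟩
        have e1 : a₁ = ε + ε := by
          apply inj; rw [ha1, hzinv, map_add, hφε]
        have e12 : a₁₂ = ε * a₂ := by
          apply inj; rw [_root_.map_mul, hφε, ha12, hzinv, ha2]; ring
        have e13 : a₁₃ = ε * a₃ := by
          apply inj; rw [_root_.map_mul, hφε, ha13, hzinv, ha3]; ring
        have e123 : a₁₂₃ = ε * a₂₃ := by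
          apply inj
          rcases fricke_other hz0 hw0 hv0 ha1 ha2 ha3 ha12 ha13 h23b Hrel with h123 | h123 <;>
            rw [_root_.map_mul, hφε, h123, hzinv, h23b] <;> ring
        exact epsCase hε e1 e12 e13 e123

end Stmt3Aux

open Matrix

/-- Surjectivity Theorem for triples: over any finite field `F_q`, every point of the
Fricke–Vogt hypersurface `Z(F_q) ⊂ A⁷` lifts to a triple of matrices in `SL(2, F_q)`
under the trace projection. -/
theorem stmt3 (F : Type*) [Field F] [Fintype F]
    (a₁ a₂ a₃ a₁₂ a₁₃ a₂₃ a₁₂₃ : F)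
    (hrel : a₁₂₃ ^ 2 - a₁₂₃ * (a₁₂ * a₃ + a₁₃ * a₂ + a₂₃ * a₁ - a₁ * a₂ * a₃)
      + (a₁ ^ 2 + a₂ ^ 2 + a₃ ^ 2 + a₁₂ ^ 2 + a₁₃ ^ 2 + a₂₃ ^ 2
        - a₁ * a₂ * a₁₂ - a₁ * a₃ * a₁₃ - a₂ * a₃ * a₂₃ + a₁₂ * a₁₃ * a₂₃ - 4) = 0) :
    ∃ x y u : Matrix.SpecialLinearGroup (Fin 2) F,
      Matrix.trace (x : Matrix (Fin 2) (Fin 2) F) = a₁ ∧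
      Matrix.trace (y : Matrix (Fin 2) (Fin 2) F) = a₂ ∧
      Matrix.trace (u : Matrix (Fin 2) (Fin 2) F) = a₃ ∧
      Matrix.trace ((x * y : Matrix.SpecialLinearGroup (Fin 2) F) : Matrix (Fin 2) (Fin 2) F) = a₁₂ ∧
      Matrix.trace ((x * u : Matrix.SpecialLinearGroup (Fin 2) F) : Matrix (Fin 2) (Fin 2) F) = a₁₃ ∧
      Matrix.trace ((y * u : Matrix.SpecialLinearGroup (Fin 2) F) : Matrix (Fin 2) (Fin 2) F) = a₂₃ ∧
      Matrix.trace ((x * y * u : Matrix.SpecialLinearGroup (Fin 2) F) : Matrix (Fin 2) (Fin 2) F) = a₁₂₃ := by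
  by_cases h12 : a₁ ^ 2 + a₂ ^ 2 + a₁₂ ^ 2 - a₁ * a₂ * a₁₂ - 4 = 0
  · by_cases h13 : a₁ ^ 2 + a₃ ^ 2 + a₁₃ ^ 2 - a₁ * a₃ * a₁₃ - 4 = 0
    · by_cases h23 : a₂ ^ 2 + a₃ ^ 2 + a₂₃ ^ 2 - a₂ * a₃ * a₂₃ - 4 = 0
      · exact Stmt3Aux.caseC a₁ a₂ a₃ a₁₂ a₁₃ a₂₃ a₁₂₃ hrel h12 h13 h23
      · -- pair (y,u) nondegenerate : rotate
        obtain ⟨x', y', u', k1, k2, k3, k12, k13, k23, k123⟩ :=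
          Stmt3Aux.main12 a₂ a₃ a₁ a₂₃ a₁₂ a₁₃ a₁₂₃ (by linear_combination hrel) (fun h => h23 (by linear_combination h))
        rw [Matrix.SpecialLinearGroup.coe_mul] at k12 k13 k23
        rw [Matrix.SpecialLinearGroup.coe_mul, Matrix.SpecialLinearGroup.coe_mul] at k123
        refine ⟨u', x', y', k3, k1, k2, ?_, ?_, ?_, ?_⟩
        · rw [Matrix.SpecialLinearGroup.coe_mul, Matrix.trace_mul_comm]; exact k13
        · rw [Matrix.SpecialLinearGroup.coe_mul, Matrix.trace_mul_comm]; exact k23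
        · rw [Matrix.SpecialLinearGroup.coe_mul]; exact k12
        · rw [Matrix.SpecialLinearGroup.coe_mul, Matrix.SpecialLinearGroup.coe_mul]
          rw [Matrix.trace_mul_cycle] at k123; exact k123
    · -- pair (u,x) nondegenerate : rotate the other way
      obtain ⟨x', y', u', k1, k2, k3, k12, k13, k23, k123⟩ :=
        Stmt3Aux.main12 a₃ a₁ a₂ a₁₃ a₂₃ a₁₂ a₁₂₃ (by linear_combination hrel) (fun h => h13 (by linear_combination h))
      rw [Matrix.SpecialLinearGroup.coe_mul] at k12 k13 k23
      rw [Matrix.SpecialLinearGroup.coe_mul, Matrix.SpecialLinearGroup.coe_mul] at k123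
      refine ⟨y', u', x', k2, k3, k1, ?_, ?_, ?_, ?_⟩
      · rw [Matrix.SpecialLinearGroup.coe_mul]; exact k23
      · rw [Matrix.SpecialLinearGroup.coe_mul, Matrix.trace_mul_comm]; exact k12
      · rw [Matrix.SpecialLinearGroup.coe_mul, Matrix.trace_mul_comm]; exact k13
      · rw [Matrix.SpecialLinearGroup.coe_mul, Matrix.SpecialLinearGroup.coe_mul]
        rw [Matrix.trace_mul_cycle, Matrix.trace_mul_cycle] at k123; exact k123
  · exact Stmt3Aux.main12 a₁ a₂ a₃ a₁₂ a₁₃ a₂₃ a₁₂₃ hrel h12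
end

section
/- Let F be an algebraically closed field, and let L ∈ F[a₁, a₂, a₃, a₁₂, a₁₃, a₂₃, a₁₂₃] be the polynomial L = a₁₂₃² − a₁₂₃(a₁₂ a₃ + a₁₃ a₂ + a₂₃ a₁ − a₁ a₂ a₃) + (a₁² + a₂² + a₃² + a₁₂² + a₁₃² + a₂₃² − a₁ a₂ a₁₂ − a₁ a₃ a₁₃ − a₂ a₃ a₂₃ + a₁₂ a₁₃ a₂₃ − 4). Then the hypersurface Z = {x ∈ F⁷ : L(x) = 0} is irreducible; equivalently, the vanishing ideal of the zero set of L in F⁷ is a prime ideal of the polynomial ring F[a₁, a₂, a₃, a₁₂, a₁₃, a₂₃, a₁₂₃]. -/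
/-!
Since `L` is irreducible, `(L)` is a prime ideal, hence radical, so by the Nullstellensatz it is
the vanishing ideal of its zero set.

Write `aᵢ = X i` in the order `a₁, a₂, a₃, a₁₂, a₁₃, a₂₃, a₁₂₃`. As a polynomial in `a₁₂₃`
over the other six variables, `L = Y² - bY + c` is monic quadratic, so it is irreducible as soon
as it has no root `r`. Specialising `a₁ = a₂ = a₃ = 0` and `a₁₂ = a₁₃ = a₂₃ = t` kills `b` and
turns `c` into `t³ + 3t² - 4`, so a root would make `-(t³ + 3t² - 4)` a square in `R[t]`, which
is impossible because its degree is odd.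
-/

open MvPolynomial

namespace Polynomial

theorem irreducible_X_sq_sub_C_mul_X_add_C {R : Type*} [CommRing R] [IsDomain R] {b c : R}
    (h : ∀ r, r ^ 2 - b * r + c ≠ 0) : Irreducible (X ^ 2 - C b * X + C c) := by
  have hdeg : (X ^ 2 - C b * X + C c).natDegree = 2 := by compute_degree!
  have hmonic : (X ^ 2 - C b * X + C c).Monic := by monicity!
  rw [hmonic.irreducible_iff_roots_eq_zero_of_degree_le_three hdeg.ge
    (hdeg.trans_le (by norm_num))]
  refine Multiset.eq_zero_of_forall_notMem fun r hr => h r ?_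
  simpa using (mem_roots hmonic.ne_zero).mp hr

theorem not_isSquare_of_odd_natDegree {R : Type*} [Semiring R] [NoZeroDivisors R] {p : R[X]}
    (hp : Odd p.natDegree) : ¬IsSquare p := by
  rintro ⟨q, rfl⟩
  rw [← sq, natDegree_pow] at hp
  exact Nat.not_odd_iff_even.mpr (even_two_mul _) hp

end Polynomial

namespace MvPolynomial

theorem isPrime_vanishingIdeal_setOf_eval_eq_zero {σ k : Type*} [Finite σ] [Field k]
    [IsAlgClosed k] {f : MvPolynomial σ k} (hf : Irreducible f) :
    (vanishingIdeal k {x : σ → k | eval x f = 0}).IsPrime := by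
  have hspan : (Ideal.span {f}).IsPrime := (Ideal.span_singleton_prime hf.ne_zero).mpr hf.prime
  have hzero : {x : σ → k | eval x f = 0} = zeroLocus k (Ideal.span {f}) := by
    simp [zeroLocus_span]
  rw [hzero, vanishingIdeal_zeroLocus_eq_radical, hspan.radical]
  exact hspan

end MvPolynomial

section FrickeVogt

variable (R : Type*) [CommRing R]

noncomputable def frickeVogt : MvPolynomial (Fin 7) R :=
  (X 6 : MvPolynomial (Fin 7) R) ^ 2
    - X 6 * (X 3 * X 2 + X 4 * X 1 + X 5 * X 0 - X 0 * X 1 * X 2)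
    + (X 0 ^ 2 + X 1 ^ 2 + X 2 ^ 2 + X 3 ^ 2 + X 4 ^ 2 + X 5 ^ 2
      - X 0 * X 1 * X 3 - X 0 * X 2 * X 4 - X 1 * X 2 * X 5
      + X 3 * X 4 * X 5 - 4)

noncomputable def frickeVogtLinearCoeff : MvPolynomial (Fin 6) R :=
  X 3 * X 2 + X 4 * X 1 + X 5 * X 0 - X 0 * X 1 * X 2

noncomputable def frickeVogtConstCoeff : MvPolynomial (Fin 6) R :=
  X 0 ^ 2 + X 1 ^ 2 + X 2 ^ 2 + X 3 ^ 2 + X 4 ^ 2 + X 5 ^ 2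
    - X 0 * X 1 * X 3 - X 0 * X 2 * X 4 - X 1 * X 2 * X 5 + X 3 * X 4 * X 5 - 4

theorem frickeVogt_quadratic_ne_zero [IsDomain R] (r : MvPolynomial (Fin 6) R) :
    r ^ 2 - frickeVogtLinearCoeff R * r + frickeVogtConstCoeff R ≠ 0 := by
  intro hr
  set φ : MvPolynomial (Fin 6) R →ₐ[R] Polynomial R := aeval ![0, 0, 0, .X, .X, .X]
  have hsq : -(Polynomial.X ^ 3 + 3 * Polynomial.X ^ 2 - 4) = φ r * φ r := by
    have h := congrArg φ hr
    simp only [φ, frickeVogtLinearCoeff, frickeVogtConstCoeff, map_add, map_sub, map_mul, map_pow,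
      map_ofNat, aeval_X, map_zero, Matrix.cons_val] at h
    linear_combination -h
  refine Polynomial.not_isSquare_of_odd_natDegree ?_ ⟨φ r, hsq⟩
  have hdeg : (-(Polynomial.X ^ 3 + 3 * Polynomial.X ^ 2 - 4) : Polynomial R).natDegree = 3 := by
    compute_degree!
  rw [hdeg]
  decide

theorem optionEquivLeft_rename_frickeVogt :
    optionEquivLeft R (Fin 6) (rename finSuccEquivLast (frickeVogt R)) =
      Polynomial.X ^ 2 - Polynomial.C (frickeVogtLinearCoeff R) * Polynomial.X
        + Polynomial.C (frickeVogtConstCoeff R) := by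
  have hσ : ⇑(finSuccEquivLast : Fin 7 ≃ Option (Fin 6)) =
      ![some 0, some 1, some 2, some 3, some 4, some 5, none] := by decide
  simp only [frickeVogt, frickeVogtLinearCoeff, frickeVogtConstCoeff, map_add, map_sub, map_mul,
    map_pow, map_ofNat, rename_X, hσ, Matrix.cons_val, optionEquivLeft_X_some,
    optionEquivLeft_X_none]
  ring

theorem irreducible_frickeVogt [IsDomain R] : Irreducible (frickeVogt R) := by
  refine .of_map (f := (renameEquiv R finSuccEquivLast).trans (optionEquivLeft R (Fin 6))) ?_
  rw [AlgEquiv.trans_apply, renameEquiv_apply, optionEquivLeft_rename_frickeVogt]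
  exact Polynomial.irreducible_X_sq_sub_C_mul_X_add_C (frickeVogt_quadratic_ne_zero R)

end FrickeVogt

/-- Over an algebraically closed field `F`, the Fricke–Vogt hypersurface
`Z = {x ∈ F⁷ : L(x) = 0}` is irreducible: the vanishing ideal of the zero set of `L`
is a prime ideal of `F[a₁, a₂, a₃, a₁₂, a₁₃, a₂₃, a₁₂₃]`.
Variables: `a₁ = X 0`, `a₂ = X 1`, `a₃ = X 2`, `a₁₂ = X 3`, `a₁₃ = X 4`, `a₂₃ = X 5`,
`a₁₂₃ = X 6`. -/
theorem stmt4 (F : Type*) [Field F] [IsAlgClosed F] :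
    (MvPolynomial.vanishingIdeal F
      {x : Fin 7 → F |
        MvPolynomial.eval x
          ((X 6 : MvPolynomial (Fin 7) F) ^ 2
            - X 6 * (X 3 * X 2 + X 4 * X 1 + X 5 * X 0 - X 0 * X 1 * X 2)
            + (X 0 ^ 2 + X 1 ^ 2 + X 2 ^ 2 + X 3 ^ 2 + X 4 ^ 2 + X 5 ^ 2
              - X 0 * X 1 * X 3 - X 0 * X 2 * X 4 - X 1 * X 2 * X 5
              + X 3 * X 4 * X 5 - 4)) = 0}).IsPrime :=
  isPrime_vanishingIdeal_setOf_eval_eq_zero (irreducible_frickeVogt F)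
end

section
/- Let F_q be any finite field and let z ∈ SL(2, F_q) be a matrix with tr(z) ≠ 2 and tr(z) ≠ −2. Then z is a commutator: there exist x, y ∈ SL(2, F_q) such that [x, y] = x y x⁻¹ y⁻¹ = z. -/
open Matrix
open scoped commutatorElement

/-!
A non-scalar `2 × 2` matrix `M` has a cyclic vector `v`, and in the basis `v, M v` it becomes the
companion matrix `!![0, -det M; 1, trace M]`. Hence two non-scalar matrices of `SL(2, F)` with the
same trace are conjugate by some `g ∈ GL(2, F)`, and conjugation by `g` preserves `SL(2, F)` and
commutators. An element `z` with trace `≠ ±2` is not scalar, so it suffices to find one non-scalar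
commutator of each trace `t ≠ ±2`. If `a ≠ 0` and `a² ≠ 1`, the trace of
`⁅diag(a, a⁻¹), !![1, 1; m - 1, m]⁆` is `2m - (m - 1)(a² + a⁻²)`, affine in `m` with nonzero slope.
Otherwise `F` is `𝔽₂` or `𝔽₃`, where `t = 3` is forced and `⁅!![1, 1; 0, 1], !![1, 0; 1, 1]⁆` works.
-/

lemma eq_three_of_forall_sq_eq_one {F : Type*} [Field F] (hsq : ∀ a : F, a ≠ 0 → a ^ 2 = 1)
    {t : F} (h2 : t ≠ 2) (h2' : t ≠ -2) : t = 3 := by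
  have E1 := hsq (t - 2) (sub_ne_zero.2 h2)
  have E2 := hsq (t + 2) (by rwa [← sub_neg_eq_add, sub_ne_zero])
  rcases eq_or_ne (2 : F) 0 with h | h
  · have : (t - 3) ^ 2 = 0 := by linear_combination E1 + (3 - t) * h
    exact sub_eq_zero.1 (pow_eq_zero_iff two_ne_zero |>.1 this)
  · have h3 : (3 : F) = 0 := by linear_combination hsq 2 h
    linear_combination -(E2 - E1) + (3 * t - 1) * h3

namespace Matrix

lemma notMem_range_scalar_of_apply_ne_zero {n R : Type*} [Fintype n] [DecidableEq n] [Semiring R]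
    {M : Matrix n n R} {i j : n} (hij : i ≠ j) (h : M i j ≠ 0) : M ∉ Set.range (scalar n) := by
  rintro ⟨c, rfl⟩
  simp [hij] at h

section CommRing

variable {R : Type*} [CommRing R]

def cyclicMatrix (M : Matrix (Fin 2) (Fin 2) R) (v : Fin 2 → R) : Matrix (Fin 2) (Fin 2) R :=
  !![v 0, (M *ᵥ v) 0; v 1, (M *ᵥ v) 1]

/-- Cayley–Hamilton applied to `v`: `M (M v) = trace M • M v - det M • v`. -/
lemma mul_cyclicMatrix (M : Matrix (Fin 2) (Fin 2) R) (v : Fin 2 → R) :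
    M * cyclicMatrix M v = cyclicMatrix M v * !![0, -M.det; 1, M.trace] := by
  rw [M.eta_fin_two]
  simp only [cyclicMatrix, mulVec, dotProduct, Fin.sum_univ_two, mul_fin_two, det_fin_two_of,
    trace_fin_two_of, of_apply, cons_val', cons_val_zero, cons_val_one, empty_val', cons_val_fin_one]
  ext i j
  fin_cases i <;> fin_cases j <;> simp <;> ring

lemma det_cyclicMatrix (M : Matrix (Fin 2) (Fin 2) R) (p r : R) :
    (cyclicMatrix M ![p, r]).det = M 1 0 * p ^ 2 + (M 1 1 - M 0 0) * p * r - M 0 1 * r ^ 2 := by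
  simp [cyclicMatrix, det_fin_two_of, mulVec, dotProduct, Fin.sum_univ_two]
  ring

end CommRing

section Field

variable {F : Type*} [Field F]

lemma exists_det_cyclicMatrix_ne_zero {M : Matrix (Fin 2) (Fin 2) F}
    (hM : M ∉ Set.range (scalar (Fin 2))) : ∃ v, (cyclicMatrix M v).det ≠ 0 := by
  by_cases h10 : M 1 0 = 0
  · by_cases h01 : M 0 1 = 0
    · refine ⟨![1, 1], ?_⟩
      have hdiag : M 1 1 - M 0 0 ≠ 0 := fun h ↦ hM ⟨M 0 0, by
        ext i j
        fin_cases i <;> fin_cases j <;> simp [h10, h01, sub_eq_zero.1 h]⟩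
      simpa [det_cyclicMatrix, h10, h01] using hdiag
    · exact ⟨![0, 1], by simpa [det_cyclicMatrix] using h01⟩
  · exact ⟨![1, 0], by simpa [det_cyclicMatrix] using h10⟩

lemma isConj_companion {M : Matrix (Fin 2) (Fin 2) F} (hM : M ∉ Set.range (scalar (Fin 2))) :
    IsConj !![0, -M.det; 1, M.trace] M := by
  obtain ⟨v, hv⟩ := exists_det_cyclicMatrix_ne_zero hM
  exact ⟨nonsingInvUnit _ (isUnit_iff_ne_zero.2 hv), (mul_cyclicMatrix M v).symm⟩

lemma isConj_of_det_eq_of_trace_eq {M N : Matrix (Fin 2) (Fin 2) F}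
    (hM : M ∉ Set.range (scalar (Fin 2))) (hN : N ∉ Set.range (scalar (Fin 2)))
    (hdet : M.det = N.det) (htr : M.trace = N.trace) : IsConj M N := by
  have hN' := isConj_companion hN
  rw [← hdet, ← htr] at hN'
  exact (isConj_comm.1 (isConj_companion hM)).trans hN'

end Field

namespace SpecialLinearGroup

section CommRing

variable {n R : Type*} [Fintype n] [DecidableEq n] [CommRing R]

def conjByUnit (c : (Matrix n n R)ˣ) : SpecialLinearGroup n R →* SpecialLinearGroup n R where
  toFun A := ⟨c * A * ↑c⁻¹, by
    rw [det_mul, det_mul, A.2, mul_one, ← det_mul, Units.mul_inv, det_one]⟩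
  map_one' := Subtype.ext (by simp)
  map_mul' A B := Subtype.ext <| by
    change c * (A * B : Matrix n n R) * (↑c⁻¹ : Matrix n n R) =
      c * A * (↑c⁻¹ : Matrix n n R) * (c * B * (↑c⁻¹ : Matrix n n R))
    simp [mul_assoc]

@[simp]
lemma coe_conjByUnit (c : (Matrix n n R)ˣ) (A : SpecialLinearGroup n R) :
    (conjByUnit c A : Matrix n n R) = c * A * (↑c⁻¹ : Matrix n n R) :=
  rfl

lemma conjByUnit_apply_of_semiconjBy {c : (Matrix n n R)ˣ} {A B : SpecialLinearGroup n R}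
    (h : SemiconjBy (c : Matrix n n R) A B) : conjByUnit c A = B :=
  Subtype.coe_injective <| show (conjByUnit c A : Matrix n n R) = B by simp [h.eq, mul_assoc]

lemma exists_commutatorElement_eq_of_isConj {x y B : SpecialLinearGroup n R}
    (h : IsConj ((⁅x, y⁆ : SpecialLinearGroup n R) : Matrix n n R) B) :
    ∃ x' y' : SpecialLinearGroup n R, ⁅x', y'⁆ = B := by
  obtain ⟨c, hc⟩ := h
  exact ⟨conjByUnit c x, conjByUnit c y, by
    rw [← map_commutatorElement, conjByUnit_apply_of_semiconjBy hc]⟩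

lemma coe_commutatorElement (A B : SpecialLinearGroup n R) :
    ((⁅A, B⁆ : SpecialLinearGroup n R) : Matrix n n R) =
      A * B * adjugate (A : Matrix n n R) * adjugate (B : Matrix n n R) := by
  simp [commutatorElement_def]

end CommRing

lemma coe_notMem_range_scalar {R : Type*} [CommRing R] [NoZeroDivisors R]
    (A : SpecialLinearGroup (Fin 2) R) (h2 : trace (A : Matrix (Fin 2) (Fin 2) R) ≠ 2)
    (h2' : trace (A : Matrix (Fin 2) (Fin 2) R) ≠ -2) :
    (A : Matrix (Fin 2) (Fin 2) R) ∉ Set.range (scalar (Fin 2)) := by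
  rintro ⟨c, hc⟩
  have hdet : c ^ 2 = 1 := by simpa [← hc, det_fin_two, sq] using A.2
  rcases sq_eq_one_iff.1 hdet with rfl | rfl
  · exact h2 (by simp [← hc])
  · exact h2' (by simp [← hc])

section Field

variable {F : Type*} [Field F]

lemma exists_commutatorElement_trace_eq_of_sq_ne_one {a : F} (ha : a ≠ 0) (ha2 : a ^ 2 ≠ 1)
    (t : F) : ∃ x y : SpecialLinearGroup (Fin 2) F,
      ((⁅x, y⁆ : SpecialLinearGroup (Fin 2) F) : Matrix (Fin 2) (Fin 2) F) ∉
        Set.range (scalar (Fin 2)) ∧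
      trace ((⁅x, y⁆ : SpecialLinearGroup (Fin 2) F) : Matrix (Fin 2) (Fin 2) F) = t := by
  have hab : a * a⁻¹ = 1 := mul_inv_cancel₀ ha
  set u := a ^ 2 + a⁻¹ ^ 2
  have hu : 2 - u ≠ 0 := by
    intro h
    have : (a - a⁻¹) ^ 2 = 0 := by linear_combination -h - 2 * hab
    apply ha2
    linear_combination a * sub_eq_zero.1 (pow_eq_zero_iff two_ne_zero |>.1 this) + hab
  obtain ⟨m, hm⟩ : ∃ m, m * (2 - u) = t - u := ⟨_, div_mul_cancel₀ _ hu⟩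
  let x : SpecialLinearGroup (Fin 2) F := ⟨!![a, 0; 0, a⁻¹], by simp [det_fin_two_of, ha]⟩
  let y : SpecialLinearGroup (Fin 2) F := ⟨!![1, 1; m - 1, m], by simp [det_fin_two_of]⟩
  refine ⟨x, y, notMem_range_scalar_of_apply_ne_zero zero_ne_one ?_, ?_⟩ <;>
    rw [coe_commutatorElement] <;>
    simp only [x, y, adjugate_fin_two_of, mul_fin_two, trace_fin_two_of, of_apply, cons_val',
      cons_val_zero, cons_val_one, empty_val', cons_val_fin_one, zero_mul, add_zero, zero_add,
      mul_one]
  · rw [hab]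
    exact fun h ↦ ha2 (by linear_combination h)
  · linear_combination hm + 2 * m * hab

lemma exists_commutatorElement_trace_eq_three : ∃ x y : SpecialLinearGroup (Fin 2) F,
    ((⁅x, y⁆ : SpecialLinearGroup (Fin 2) F) : Matrix (Fin 2) (Fin 2) F) ∉
      Set.range (scalar (Fin 2)) ∧
    trace ((⁅x, y⁆ : SpecialLinearGroup (Fin 2) F) : Matrix (Fin 2) (Fin 2) F) = 3 := by
  let x : SpecialLinearGroup (Fin 2) F := ⟨!![1, 1; 0, 1], by simp [det_fin_two_of]⟩
  let y : SpecialLinearGroup (Fin 2) F := ⟨!![1, 0; 1, 1], by simp [det_fin_two_of]⟩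
  have hxy : ((⁅x, y⁆ : SpecialLinearGroup (Fin 2) F) : Matrix (Fin 2) (Fin 2) F) =
      !![3, -1; 1, 0] := by
    rw [coe_commutatorElement]
    simp only [x, y, adjugate_fin_two_of, mul_fin_two]
    norm_num
  refine ⟨x, y, notMem_range_scalar_of_apply_ne_zero one_ne_zero ?_, ?_⟩ <;>
    simp [hxy, trace_fin_two_of]

lemma exists_commutatorElement_trace_eq {t : F} (h2 : t ≠ 2) (h2' : t ≠ -2) :
    ∃ x y : SpecialLinearGroup (Fin 2) F,
      ((⁅x, y⁆ : SpecialLinearGroup (Fin 2) F) : Matrix (Fin 2) (Fin 2) F) ∉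
        Set.range (scalar (Fin 2)) ∧
      trace ((⁅x, y⁆ : SpecialLinearGroup (Fin 2) F) : Matrix (Fin 2) (Fin 2) F) = t := by
  by_cases hsq : ∀ a : F, a ≠ 0 → a ^ 2 = 1
  · rw [eq_three_of_forall_sq_eq_one hsq h2 h2']
    exact exists_commutatorElement_trace_eq_three
  · push Not at hsq
    obtain ⟨a, ha, ha2⟩ := hsq
    exact exists_commutatorElement_trace_eq_of_sq_ne_one ha ha2 t

end Field

end SpecialLinearGroup

end Matrix

theorem stmt13_general (F : Type*) [Field F]
    (z : Matrix.SpecialLinearGroup (Fin 2) F)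
    (h2 : Matrix.trace (z : Matrix (Fin 2) (Fin 2) F) ≠ 2)
    (h2' : Matrix.trace (z : Matrix (Fin 2) (Fin 2) F) ≠ -2) :
    ∃ x y : Matrix.SpecialLinearGroup (Fin 2) F, ⁅x, y⁆ = z := by
  obtain ⟨x, y, hxy, htr⟩ := SpecialLinearGroup.exists_commutatorElement_trace_eq h2 h2'
  refine SpecialLinearGroup.exists_commutatorElement_eq_of_isConj
    (isConj_of_det_eq_of_trace_eq hxy (z.coe_notMem_range_scalar h2 h2') ?_ htr)
  exact (⁅x, y⁆ : SpecialLinearGroup (Fin 2) F).det_coe.trans z.det_coe.symm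

/-- Over any finite field, every element of `SL(2, F_q)` whose trace is neither `2`
nor `−2` is a commutator. -/
theorem stmt13 (F : Type*) [Field F] [Fintype F]
    (z : Matrix.SpecialLinearGroup (Fin 2) F)
    (h2 : Matrix.trace (z : Matrix (Fin 2) (Fin 2) F) ≠ 2)
    (h2' : Matrix.trace (z : Matrix (Fin 2) (Fin 2) F) ≠ -2) :
    ∃ x y : Matrix.SpecialLinearGroup (Fin 2) F, ⁅x, y⁆ = z :=
  stmt13_general F z h2 h2'
end

section
/- For every prime power q there exist x, y ∈ SL(2, F_q) such that the Engel sequence e₁ = [x, y], e_{n+1} = [e_n, y] satisfies e_n ≠ 1 and e_n ≠ −1 for all n ≥ 1 (where 1 and −1 denote plus and minus the identity matrix). In particular, the dynamical system (x,y) ↦ ([x,y], y) on SL(2,F_q)² has nontrivial periodic points for every q. -/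
/-!
If `y` conjugates `x` to `x⁻¹`, then `⁅x ^ k, y⁆ = x ^ k * x ^ k`, so when `x ^ 6 = 1` the
Engel sequence of `(x, y)` alternates between `x ^ 2` and `x ^ 4`. In `SL(2, F)` take for `x`
the companion matrix of `X ^ 2 - X + 1`, of order 6; the trace-zero matrix
`!![a, b; a + b, -a]` inverts it, and has determinant 1 as soon as `a ^ 2 + a * b + b ^ 2 = -1`.
Such `a, b` exist when `3 ≠ 0`: for odd `q` by the pigeonhole argument for sums of two
quadratics, for even `q` trivially. In characteristic 3 that form is the square `(a - b) ^ 2`,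
which misses `-1` over `𝔽₃`, and there the Engel map `g ↦ ⁅g, y⁆` has an explicit 3-cycle
avoiding `±1` instead.
-/

open scoped commutatorElement

/-- The Engel sequence: `engel x y 0 = e₁ = [x, y]` and
`engel x y n = e_{n+1} = [e_n, y]`. -/
def engel {G : Type*} [Group G] (x y : G) : ℕ → G
  | 0 => ⁅x, y⁆
  | n + 1 => ⁅engel x y n, y⁆

open scoped MatrixGroups

section Group

variable {G : Type*} [Group G]

theorem engel_mem_of_mem {x y : G} {S : Set G} (h₀ : ⁅x, y⁆ ∈ S)
    (hS : ∀ g ∈ S, ⁅g, y⁆ ∈ S) (n : ℕ) : engel x y n ∈ S := by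
  induction n with
  | zero => exact h₀
  | succ n ih => exact hS _ ih

theorem commutatorElement_pow_of_conj_eq_inv {x y : G} (h : y * x * y⁻¹ = x⁻¹) (k : ℕ) :
    ⁅x ^ k, y⁆ = x ^ (2 * k) := by
  calc ⁅x ^ k, y⁆ = x ^ k * ((y * x * y⁻¹) ^ k)⁻¹ := by
        rw [conj_pow, commutatorElement_def]; group
    _ = x ^ (2 * k) := by rw [h, inv_pow, inv_inv, two_mul, pow_add]

theorem engel_mem_of_conj_eq_inv {x y : G} (h : y * x * y⁻¹ = x⁻¹) (hx : x ^ 6 = 1)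
    (n : ℕ) : engel x y n ∈ ({x ^ 2, x ^ 4} : Set G) := by
  have hc := commutatorElement_pow_of_conj_eq_inv h
  have h₁ : ⁅x, y⁆ = x ^ 2 := by simpa using hc 1
  refine engel_mem_of_mem (by simp [h₁]) ?_ n
  rintro g (rfl | rfl)
  · simp [hc 2]
  · have h₈ : x ^ (2 * 4) = x ^ 2 := by
      rw [show 2 * 4 = 6 + 2 from rfl, pow_add, hx, one_mul]
    simp [hc 4, h₈]

end Group

namespace Matrix

theorem ne_one_and_ne_neg_one_of_apply_ne_zero {n R : Type*} [DecidableEq n]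
    [AddGroupWithOne R] {M : Matrix n n R} {i j : n} (hij : i ≠ j) (h : M i j ≠ 0) :
    M ≠ 1 ∧ M ≠ -1 := by
  constructor <;> rintro rfl <;> simp [one_apply_ne hij] at h

theorem SpecialLinearGroup.coe_commutatorElement_s14 {n R : Type*} [Fintype n] [DecidableEq n]
    [CommRing R] (A B : SpecialLinearGroup n R) :
    ((⁅A, B⁆ : SpecialLinearGroup n R) : Matrix n n R) =
      (A : Matrix n n R) * (B : Matrix n n R) * adjugate (A : Matrix n n R) *
        adjugate (B : Matrix n n R) := by
  simp only [commutatorElement_def, SpecialLinearGroup.coe_mul, SpecialLinearGroup.coe_inv]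

end Matrix

open Polynomial in
theorem FiniteField.exists_sq_add_mul_add_sq_eq_neg_one {F : Type*} [Field F] [Fintype F]
    (h3 : (3 : F) ≠ 0) : ∃ a b : F, a ^ 2 + a * b + b ^ 2 = -1 := by
  by_cases h2 : ringChar F = 2
  · have h2' : (2 : F) = 0 := by exact_mod_cast h2 ▸ ringChar.Nat.cast_ringChar
    exact ⟨1, 0, by linear_combination h2'⟩
  -- `a ^ 2 + a * b + b ^ 2 = u ^ 2 + 3 * v ^ 2` for `a = u - v`, `b = 2 * v`
  obtain ⟨u, v, huv⟩ := FiniteField.exists_root_sum_quadratic (f := X ^ 2)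
    (g := C 3 * X ^ 2 + C 0 * X + C 1) (degree_X_pow 2) (degree_quadratic h3)
    (FiniteField.odd_card_of_char_ne_two h2)
  refine ⟨u - v, 2 * v, ?_⟩
  simp only [eval_add, eval_mul, eval_pow, eval_X, eval_C] at huv
  linear_combination huv

section SL2

variable {F : Type*} [Field F]

theorem exists_engel_apply_zero_one_ne_zero_of_sq_add_mul_add_sq_eq_neg_one {a b : F}
    (hab : a ^ 2 + a * b + b ^ 2 = -1) :
    ∃ x y : SL(2, F), ∀ n, ((engel x y n : SL(2, F)) : Matrix (Fin 2) (Fin 2) F) 0 1 ≠ 0 := by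
  let x : SL(2, F) := ⟨!![0, 1; -1, 1], by simp⟩
  let y : SL(2, F) := ⟨!![a, b; a + b, -a], by simp; linear_combination -hab⟩
  have hconj : y * x * y⁻¹ = x⁻¹ := by
    apply Subtype.ext
    simp only [Matrix.SpecialLinearGroup.coe_mul, Matrix.SpecialLinearGroup.coe_inv]
    simp [x, y, Matrix.adjugate_fin_two_of]
    grind
  have hx2 : ((x ^ 2 : SL(2, F)) : Matrix (Fin 2) (Fin 2) F) = !![-1, 1; -1, 0] := by
    rw [sq, Matrix.SpecialLinearGroup.coe_mul]
    simp [x]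
  have hx4 : ((x ^ 4 : SL(2, F)) : Matrix (Fin 2) (Fin 2) F) = !![0, -1; 1, -1] := by
    rw [show 4 = 2 + 2 from rfl, pow_add, Matrix.SpecialLinearGroup.coe_mul, hx2]
    simp
  have hx6 : x ^ 6 = 1 := by
    apply Subtype.ext
    rw [show 6 = 2 + 4 from rfl, pow_add, Matrix.SpecialLinearGroup.coe_mul, hx2, hx4]
    simp [Matrix.one_fin_two]
  have hS : ∀ g ∈ ({x ^ 2, x ^ 4} : Set SL(2, F)),
      (g : Matrix (Fin 2) (Fin 2) F) 0 1 ≠ 0 := by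
    rintro g (rfl | rfl) <;> simp [hx2, hx4]
  exact ⟨x, y, fun n => hS _ (engel_mem_of_conj_eq_inv hconj hx6 n)⟩

theorem exists_engel_apply_zero_one_ne_zero_of_three_eq_zero (h3 : (3 : F) = 0) :
    ∃ x y : SL(2, F), ∀ n, ((engel x y n : SL(2, F)) : Matrix (Fin 2) (Fin 2) F) 0 1 ≠ 0 := by
  let x : SL(2, F) := ⟨!![0, 1; -1, 0], by simp⟩
  let y : SL(2, F) := ⟨!![0, 1; -1, 1], by simp⟩
  let e₁ : SL(2, F) := ⟨!![-1, -1; -1, 1], by simp; grind⟩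
  let e₂ : SL(2, F) := ⟨!![-1, 1; 1, 1], by simp; grind⟩
  obtain ⟨h₁, h₂, h₃⟩ : ⁅x, y⁆ = e₁ ∧ ⁅e₁, y⁆ = e₂ ∧ ⁅e₂, y⁆ = x := by
    refine ⟨?_, ?_, ?_⟩ <;> apply Subtype.ext <;>
      rw [Matrix.SpecialLinearGroup.coe_commutatorElement_s14] <;>
      simp [x, y, e₁, e₂, Matrix.adjugate_fin_two_of] <;> grind
  let S : Set SL(2, F) := {x, e₁, e₂}
  have hclosed : ∀ g ∈ S, ⁅g, y⁆ ∈ S := by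
    rintro g (rfl | rfl | rfl) <;> simp [S, h₁, h₂, h₃]
  have hS : ∀ g ∈ S, (g : Matrix (Fin 2) (Fin 2) F) 0 1 ≠ 0 := by
    rintro g (rfl | rfl | rfl) <;> simp [x, e₁, e₂]
  exact ⟨x, y, fun n => hS _ (engel_mem_of_mem (x := x) (by simp [S, h₁]) hclosed n)⟩

end SL2

/-- For every finite field `F_q` there exist `x, y ∈ SL(2, F_q)` such that every term
of the Engel sequence `e₁ = [x, y]`, `e_{n+1} = [e_n, y]` is different from `1` and
from `−1`. -/
theorem stmt14 (F : Type*) [Field F] [Fintype F] :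
    ∃ x y : Matrix.SpecialLinearGroup (Fin 2) F, ∀ n : ℕ,
      ((engel x y n : Matrix.SpecialLinearGroup (Fin 2) F) : Matrix (Fin 2) (Fin 2) F) ≠ 1 ∧
      ((engel x y n : Matrix.SpecialLinearGroup (Fin 2) F) : Matrix (Fin 2) (Fin 2) F) ≠ -1 := by
  obtain ⟨x, y, hxy⟩ :
      ∃ x y : SL(2, F), ∀ n, ((engel x y n : SL(2, F)) : Matrix (Fin 2) (Fin 2) F) 0 1 ≠ 0 := by
    by_cases h3 : (3 : F) = 0
    · exact exists_engel_apply_zero_one_ne_zero_of_three_eq_zero h3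
    · obtain ⟨a, b, hab⟩ := FiniteField.exists_sq_add_mul_add_sq_eq_neg_one h3
      exact exists_engel_apply_zero_one_ne_zero_of_sq_add_mul_add_sq_eq_neg_one hab
  exact ⟨x, y, fun n => Matrix.ne_one_and_ne_neg_one_of_apply_ne_zero zero_ne_one (hxy n)⟩
end

section
/- Let d ≥ 3 be an odd integer. For each prime q not dividing d, let s_q denote the multiplicative order of d modulo q. For a prime p ≡ 3 (mod 4), let Q(p) be the set of odd primes q dividing p − 1 and not dividing d, and when Q(p) is nonempty set a(p) = min{ s_q : q ∈ Q(p) }. Then the set A = { a(p) : p prime, p ≡ 3 (mod 4), Q(p) ≠ ∅ } is infinite. -/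
/-!
Fix `n` and let `M = ∏_{s=1}^{n} (d^s - 1)`; a prime `q ∤ d` whose order `s_q` is at most `n`
divides `M`. By the Chinese remainder theorem and Dirichlet's theorem there is a prime `p` with
`p ≡ -1 (mod 4M)` and `p ≡ 1 (mod Q)` for a prime `Q > 4M + d`. Then `p ≡ 3 (mod 4)`, `Q ∈ Q(p)`,
and an odd prime `q ∣ p - 1` cannot divide `M ∣ p + 1`, so every `q ∈ Q(p)` has `s_q > n`,
i.e. `a(p) > n`.
-/

open Finset

theorem prime_dvd_prod_pow_sub_one_of_orderOf_le {q d n : ℕ} [Fact q.Prime] (hqd : ¬ q ∣ d)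
    (h : orderOf (d : ZMod q) ≤ n) : q ∣ ∏ s ∈ Icc 1 n, (d ^ s - 1) := by
  have hd0 : (d : ZMod q) ≠ 0 := by rwa [Ne, ZMod.natCast_eq_zero_iff]
  have hpos : 0 < orderOf (d : ZMod q) := Nat.pos_of_dvd_of_pos
    (ZMod.orderOf_dvd_card_sub_one hd0) (Nat.sub_pos_of_lt (Fact.out : q.Prime).one_lt)
  have hdvd : q ∣ d ^ orderOf (d : ZMod q) - 1 := by
    have hd : 0 < d := Nat.pos_of_ne_zero (by rintro rfl; exact hqd (dvd_zero q))
    rw [← ZMod.natCast_eq_zero_iff, Nat.cast_sub (Nat.one_le_pow _ _ hd)]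
    push_cast
    rw [pow_orderOf_eq_one, sub_self]
  exact hdvd.trans (dvd_prod_of_mem _ (mem_Icc.mpr ⟨hpos, h⟩))

theorem exists_prime_dvd_add_one_and_dvd_sub_one {m Q : ℕ} [NeZero m] [NeZero Q]
    (h : m.Coprime Q) : ∃ p, p.Prime ∧ m ∣ p + 1 ∧ Q ∣ p - 1 := by
  set e := ZMod.chineseRemainder h
  have ha : IsUnit (e.symm (-1, 1)) :=
    (Prod.isUnit_iff.mpr ⟨isUnit_one.neg, isUnit_one⟩).map e.symm
  obtain ⟨p, -, hp, hpa⟩ := Nat.forall_exists_prime_gt_and_eq_mod ha 0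
  have hpe := congrArg e hpa
  rw [map_natCast, e.apply_symm_apply, Prod.ext_iff] at hpe
  obtain ⟨hpm, hpQ⟩ : (p : ZMod m) = -1 ∧ (p : ZMod Q) = 1 := by simpa using hpe
  refine ⟨p, hp, ?_, ?_⟩
  · rw [← ZMod.natCast_eq_zero_iff]; push_cast; rw [hpm, neg_add_cancel]
  · rw [← ZMod.natCast_eq_zero_iff, Nat.cast_sub hp.one_le]; push_cast; rw [hpQ, sub_self]

theorem lt_orderOf_of_dvd_sub_one_of_prod_dvd_add_one {d n p q : ℕ} (hq : q.Prime)
    (hqodd : Odd q) (hqd : ¬ q ∣ d) (hp : p ≠ 0) (hqp : q ∣ p - 1)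
    (hM : ∏ s ∈ Icc 1 n, (d ^ s - 1) ∣ p + 1) : n < orderOf (d : ZMod q) := by
  have := Fact.mk hq
  by_contra! hle
  have h2 : q ∣ 2 := by
    have := Nat.dvd_sub ((prime_dvd_prod_pow_sub_one_of_orderOf_le hqd hle).trans hM) hqp
    rwa [show p + 1 - (p - 1) = 2 by omega] at this
  obtain rfl := (Nat.prime_dvd_prime_iff_eq hq Nat.prime_two).mp h2
  exact absurd hqodd (by decide)

theorem stmt15_general (d : ℕ) (hd : 3 ≤ d) :
    { m : ℕ | ∃ p : ℕ, p.Prime ∧ p % 4 = 3 ∧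
        {q : ℕ | q.Prime ∧ Odd q ∧ q ∣ p - 1 ∧ ¬ q ∣ d}.Nonempty ∧
        m = sInf { s : ℕ | ∃ q : ℕ,
              (q.Prime ∧ Odd q ∧ q ∣ p - 1 ∧ ¬ q ∣ d) ∧
              s = orderOf ((d : ZMod q)) } }.Infinite := by
  refine Set.infinite_of_forall_exists_gt fun n ↦ ?_
  set M := ∏ s ∈ Icc 1 n, (d ^ s - 1)
  have hM : 0 < M := prod_pos fun s hs ↦
    Nat.sub_pos_of_lt (Nat.one_lt_pow (by grind) (by omega))
  obtain ⟨Q, hQbig, hQ⟩ := Nat.exists_infinite_primes (4 * M + d + 1)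
  have : NeZero (4 * M) := ⟨by omega⟩
  have : NeZero Q := ⟨hQ.ne_zero⟩
  have hcop : (4 * M).Coprime Q := Nat.coprime_comm.mp <|
    hQ.coprime_iff_not_dvd.mpr fun h ↦ by have := Nat.le_of_dvd (by omega) h; omega
  obtain ⟨p, hp, hMp, hQp⟩ := exists_prime_dvd_add_one_and_dvd_sub_one hcop
  have hQmem : Q.Prime ∧ Odd Q ∧ Q ∣ p - 1 ∧ ¬ Q ∣ d :=
    ⟨hQ, hQ.odd_of_ne_two (by omega), hQp, fun h ↦ by have := Nat.le_of_dvd (by omega) h; omega⟩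
  have hp4 : 4 ∣ p + 1 := (Dvd.intro M rfl).trans hMp
  refine ⟨_, ⟨p, hp, by omega, ⟨Q, hQmem⟩, rfl⟩, ?_⟩
  refine Nat.lt_of_succ_le (le_csInf ⟨_, Q, hQmem, rfl⟩ fun s hs ↦ ?_)
  obtain ⟨q, ⟨hq, hqodd, hqp, hqd⟩, rfl⟩ := hs
  exact lt_orderOf_of_dvd_sub_one_of_prod_dvd_add_one hq hqodd hqd hp.ne_zero hqp
    ((Dvd.intro_left 4 rfl).trans hMp)

/-- Let `d ≥ 3` be odd. For a prime `p ≡ 3 (mod 4)` with `Q(p)` (the set of odd primes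
dividing `p − 1` and not dividing `d`) nonempty, let `a(p)` be the minimum over
`q ∈ Q(p)` of the multiplicative order `s_q` of `d` modulo `q`. Then the set
`A = { a(p) }` of all these values is infinite. -/
theorem stmt15 (d : ℕ) (hd : 3 ≤ d) (hodd : Odd d) :
    { m : ℕ | ∃ p : ℕ, p.Prime ∧ p % 4 = 3 ∧
        {q : ℕ | q.Prime ∧ Odd q ∧ q ∣ p - 1 ∧ ¬ q ∣ d}.Nonempty ∧
        m = sInf { s : ℕ | ∃ q : ℕ,
              (q.Prime ∧ Odd q ∧ q ∣ p - 1 ∧ ¬ q ∣ d) ∧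
              s = orderOf ((d : ZMod q)) } }.Infinite :=
  stmt15_general d hd
end

section
/- Let E₀ be the elliptic curve defined by the Weierstrass equation y² = x³ + 75x + 125, and let p > 5 be a prime. Then the group E₀(F_p) of F_p-points of the reduction of E₀ modulo p contains a point of order 2 or a point of order 3; equivalently, the order of the finite group E₀(F_p) is divisible by 2 or by 3 for every prime p > 5. -/
/-!
The cubic `x³ + 75x + 125` has discriminant `-15 · 375²`. If `-15 = t²` in `F_p`, then
`(-5, 5t)` is a point of order `3`. Otherwise the discriminant is not a square, so the cubic
has a root `r` in `F_p` and `(r, 0)` is a point of order `2`. Indeed, the Galois group of a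
finite extension of finite fields is cyclic; a generator fixes no root of a cubic without roots in
the base field, so it permutes the three roots `α, β, γ` cyclically and fixes
`(α - β)(α - γ)(β - γ)`, whose square is the discriminant.
-/

open Polynomial

lemma sub_mul_sub_mul_sub_eq_of_derangement {R : Type*} [CommRing R] {f : R → R}
    (hf : Function.Injective f) {x y z : R}
    (hx : f x = y ∨ f x = z) (hy : f y = x ∨ f y = z) (hz : f z = x ∨ f z = y) :
    (f x - f y) * (f x - f z) * (f y - f z) = (x - y) * (x - z) * (y - z) := by
  have := @hf x y; have := @hf x z; have := @hf y z
  grind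

lemma mem_range_algebraMap_of_generator_fixed {K L : Type*} [Field K] [Field L] [Algebra K L]
    [IsGalois K L] {σ : Gal(L/K)} (hσ : ∀ g, g ∈ Subgroup.zpowers σ) {w : L} (hw : σ w = w) :
    w ∈ Set.range (algebraMap K L) :=
  (InfiniteGalois.mem_range_algebraMap_iff_fixed w).mpr fun g =>
    (Subgroup.zpowers_le (H := MulAction.stabilizer Gal(L/K) w)).mpr hw (hσ g)

theorem Cubic.isSquare_discr_of_forall_eval_ne_zero {K : Type*} [Field K] [Finite K]
    {P : Cubic K} (ha : P.a ≠ 0) (hP : ∀ r : K, P.toPoly.eval r ≠ 0) : IsSquare P.discr := by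
  let L := P.toPoly.SplittingField
  let φ := algebraMap K L
  have : Finite L := Module.finite_of_finite K
  obtain ⟨x, y, z, h3⟩ := (splits_iff_roots_eq_three (φ := φ) ha).mp
    (SplittingField.splits P.toPoly)
  obtain ⟨σ, hσ⟩ := IsCyclic.exists_generator (α := Gal(L/K))
  have hσ_root {w : L} (hw : w ∈ (map φ P).roots) : σ w ∈ (map φ P).roots ∧ σ w ≠ w := by
    rw [map_roots, mem_roots_map_of_injective φ.injective (ne_zero_of_a_ne_zero ha)] at hw ⊢
    refine ⟨by rw [← aeval_def, aeval_algHom_apply, aeval_def, hw, map_zero], fun hfix => ?_⟩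
    obtain ⟨r, rfl⟩ := mem_range_algebraMap_of_generator_fixed hσ hfix
    exact hP r (φ.injective (by rwa [map_zero, ← eval₂_at_apply]))
  simp only [h3, Multiset.insert_eq_cons, Multiset.mem_cons, Multiset.mem_singleton] at hσ_root
  have hδ : σ ((x - y) * (x - z) * (y - z)) = (x - y) * (x - z) * (y - z) := by
    simp only [map_mul, map_sub]
    apply sub_mul_sub_mul_sub_eq_of_derangement σ.injective <;> grind
  obtain ⟨d, hd⟩ := mem_range_algebraMap_of_generator_fixed hσ hδ
  refine ⟨P.a * P.a * d, φ.injective ?_⟩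
  rw [discr_eq_prod_three_roots ha h3]
  simp only [map_mul]
  rw [show φ d = _ from hd]
  ring

namespace WeierstrassCurve.Affine.Point

variable {F : Type*} [Field F] [DecidableEq F] {W : WeierstrassCurve.Affine F}

lemma addOrderOf_some_eq_two {x y : F} {h : W.Nonsingular x y} (hy : y = W.negY x y) :
    addOrderOf (some x y h) = 2 := by
  have : Fact (Nat.Prime 2) := ⟨Nat.prime_two⟩
  exact addOrderOf_eq_prime (by rw [two_nsmul]; exact add_self_of_Y_eq hy) (some_ne_zero h)

lemma addOrderOf_some_eq_three {x y : F} {h : W.Nonsingular x y} (hy : y ≠ W.negY x y)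
    (hx : W.addX x x (W.slope x x y y) = x) : addOrderOf (some x y h) = 3 := by
  have : Fact (Nat.Prime 3) := ⟨Nat.prime_three⟩
  refine addOrderOf_eq_prime ?_ (some_ne_zero h)
  have hdouble := add_self_of_Y_ne (h₁ := h) hy
  rcases (X_eq_iff (h₂ := h)).mp hx with h2 | h2 <;> rw [← hdouble] at h2
  · exact absurd (add_eq_right.mp h2) (some_ne_zero h)
  · rw [succ_nsmul, two_nsmul, h2, neg_add_cancel]

end WeierstrassCurve.Affine.Point

def E₀ (F : Type*) [CommRing F] : WeierstrassCurve.Affine F :=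
  { a₁ := 0, a₂ := 0, a₃ := 0, a₄ := 75, a₆ := 125 }

namespace E₀

open WeierstrassCurve.Affine

variable {F : Type*} [Field F]

lemma Δ_eq : (E₀ F).Δ = -(2 ^ 4 * 3 ^ 3 * 5 ^ 7) := by
  simp only [E₀, WeierstrassCurve.Δ, WeierstrassCurve.b₂, WeierstrassCurve.b₄,
    WeierstrassCurve.b₆, WeierstrassCurve.b₈]
  norm_num

lemma nonsingular_iff (h2 : (2 : F) ≠ 0) (h3 : (3 : F) ≠ 0) (h5 : (5 : F) ≠ 0) {x y : F} :
    (E₀ F).Nonsingular x y ↔ y ^ 2 = x ^ 3 + 75 * x + 125 := by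
  have hΔ : (E₀ F).Δ ≠ 0 := by rw [Δ_eq]; simp [h2, h3, h5]
  rw [← equation_iff_nonsingular_of_Δ_ne_zero hΔ, equation_iff]
  simp [E₀]

lemma exists_addOrderOf_eq_two [DecidableEq F] (h2 : (2 : F) ≠ 0) (h3 : (3 : F) ≠ 0)
    (h5 : (5 : F) ≠ 0) {r : F} (hr : r ^ 3 + 75 * r + 125 = 0) :
    ∃ P : (E₀ F).Point, addOrderOf P = 2 :=
  ⟨.some r 0 ((nonsingular_iff h2 h3 h5).mpr (by linear_combination -hr)),
    Point.addOrderOf_some_eq_two (by simp [negY, E₀])⟩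

/-- `x = -5` is a root of the `3`-division polynomial `3x⁴ + 450x² + 1500x - 5625` of `E₀`. -/
lemma exists_addOrderOf_eq_three [DecidableEq F] (h2 : (2 : F) ≠ 0) (h3 : (3 : F) ≠ 0)
    (h5 : (5 : F) ≠ 0) {t : F} (ht : t ^ 2 = -15) : ∃ P : (E₀ F).Point, addOrderOf P = 3 := by
  have ht0 : t ≠ 0 := by
    rintro rfl
    exact mul_ne_zero h3 h5 (by linear_combination ht)
  have hy : 5 * t ≠ (E₀ F).negY (-5) (5 * t) := by
    simp only [negY, E₀, sub_zero]
    intro h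
    exact mul_ne_zero (mul_ne_zero h2 h5) ht0 (by linear_combination h)
  have hslope : (E₀ F).slope (-5) (-5) (5 * t) (5 * t) = -t := by
    rw [slope_of_Y_ne rfl hy, div_eq_iff (sub_ne_zero.mpr hy)]
    simp only [negY, E₀]
    linear_combination 10 * ht
  refine ⟨.some (-5) (5 * t) ((nonsingular_iff h2 h3 h5).mpr (by linear_combination 25 * ht)),
    Point.addOrderOf_some_eq_three hy ?_⟩
  rw [hslope]
  simp only [addX, E₀]
  linear_combination ht

lemma exists_root_of_not_isSquare [Finite F] (h3 : (3 : F) ≠ 0) (h5 : (5 : F) ≠ 0)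
    (hsq : ¬IsSquare (-15 : F)) : ∃ r : F, r ^ 3 + 75 * r + 125 = 0 := by
  by_contra! hroot
  obtain ⟨s, hs⟩ := Cubic.isSquare_discr_of_forall_eval_ne_zero
    (P := (⟨1, 0, 75, 125⟩ : Cubic F)) one_ne_zero fun r => by simpa [Cubic.toPoly] using hroot r
  have h375 : (375 : F) ≠ 0 := by
    rw [show (375 : F) = 3 * 5 ^ 3 by norm_num]
    simp [h3, h5]
  refine hsq ⟨s / 375, ?_⟩
  simp only [Cubic.discr] at hs
  field_simp
  linear_combination hs

theorem exists_addOrderOf_eq_two_or_three [Finite F] [DecidableEq F] (h2 : (2 : F) ≠ 0)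
    (h3 : (3 : F) ≠ 0) (h5 : (5 : F) ≠ 0) :
    ∃ P : (E₀ F).Point, addOrderOf P = 2 ∨ addOrderOf P = 3 := by
  by_cases hsq : IsSquare (-15 : F)
  · obtain ⟨t, ht⟩ := hsq
    obtain ⟨P, hP⟩ := exists_addOrderOf_eq_three h2 h3 h5 (t := t) (by rw [sq, ht])
    exact ⟨P, .inr hP⟩
  · obtain ⟨r, hr⟩ := exists_root_of_not_isSquare h3 h5 hsq
    obtain ⟨P, hP⟩ := exists_addOrderOf_eq_two h2 h3 h5 hr
    exact ⟨P, .inl hP⟩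

end E₀

/-- For every prime `p > 5`, the group of `F_p`-points of the reduction of the
elliptic curve `E₀ : y² = x³ + 75x + 125` contains a point of order `2` or a point of
order `3`; in particular `#E₀(F_p)` is divisible by `2` or by `3`. -/
theorem stmt18 (p : ℕ) [Fact p.Prime] (hp5 : 5 < p)
    (W : WeierstrassCurve.Affine (ZMod p))
    (hW : W = { a₁ := 0, a₂ := 0, a₃ := 0, a₄ := 75, a₆ := 125 }) :
    ∃ P : W.Point, addOrderOf P = 2 ∨ addOrderOf P = 3 := by
  subst hW
  have hne {n : ℕ} (hn : 0 < n) (hnp : n < p) : (n : ZMod p) ≠ 0 := by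
    rw [Ne, ZMod.natCast_eq_zero_iff]
    exact fun hdvd => absurd (Nat.le_of_dvd hn hdvd) (by omega)
  exact E₀.exists_addOrderOf_eq_two_or_three (F := ZMod p)
    (by exact_mod_cast hne (n := 2) (by norm_num) (by omega))
    (by exact_mod_cast hne (n := 3) (by norm_num) (by omega))
    (by exact_mod_cast hne (n := 5) (by norm_num) (by omega))
end
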